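/- arXiv:2509.23966 — 9 statements merged into one kernel-verified Lean document; each statement's English description precedes it below -/
import Mathlib

section
/- Let d ≥ 1, let ε ∈ (0,1), and let P = {p₁, …, p_n} ⊆ ℝ^d (with the Euclidean metric) be a set of n ≥ 2 points listed in an exact greedy permutation order, with prefixes P_i = {p₁, …, p_i} and radii r_{i−1} = dist(p_i, P_{i−1}) for i ≥ 2. Then for every i ∈ {2, …, n}, the friend list F_i = {p_j : 1 ≤ j ≤ i − 1 and dist(p_j, p_i) ≤ 8·r_{i−1}/ε} satisfies |F_i| ≤ (1 + 16/ε)^d. -/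
open Metric MeasureTheory Module ENNReal

lemma pack_card_le {E : Type*} [NormedAddCommGroup E] [NormedSpace ℝ E] [FiniteDimensional ℝ E]
    (s : Finset E) (x : E) (r R : ℝ) (hr : 0 < r) (hR : 0 ≤ R)
    (hs : ∀ c ∈ s, dist c x ≤ R)
    (h : ∀ c ∈ s, ∀ d ∈ s, c ≠ d → r ≤ dist c d) :
    (s.card : ℝ) ≤ ((2 * R + r) / r) ^ finrank ℝ E := by
  borelize E
  let μ : Measure E := Measure.addHaar
  have δpos : 0 < r / 2 := by positivity
  have ρpos : 0 < R + r / 2 := by positivity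
  have D : Set.Pairwise (s : Set E) (Function.onFun Disjoint fun c => ball (c : E) (r / 2)) := by
    rintro c hc d hd hcd
    apply ball_disjoint_ball
    have := h c hc d hd hcd
    linarith
  have A_subset : (⋃ c ∈ s, ball (c : E) (r / 2)) ⊆ ball x (R + r / 2) := by
    refine Set.iUnion₂_subset fun c hc => ?_
    apply ball_subset_ball'
    have := hs c hc
    linarith
  have I :
      (s.card : ℝ≥0∞) * ENNReal.ofReal ((r / 2) ^ finrank ℝ E) * μ (ball 0 1) ≤
        ENNReal.ofReal ((R + r / 2) ^ finrank ℝ E) * μ (ball 0 1) :=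
    calc
      (s.card : ℝ≥0∞) * ENNReal.ofReal ((r / 2) ^ finrank ℝ E) * μ (ball 0 1)
          = μ (⋃ c ∈ s, ball (c : E) (r / 2)) := by
        rw [measure_biUnion_finset D fun c _ => measurableSet_ball]
        simp only [μ.addHaar_ball_of_pos _ δpos]
        simp only [Finset.sum_const, nsmul_eq_mul, mul_assoc]
      _ ≤ μ (ball x (R + r / 2)) := measure_mono A_subset
      _ = ENNReal.ofReal ((R + r / 2) ^ finrank ℝ E) * μ (ball 0 1) := by
        simp only [μ.addHaar_ball_of_pos _ ρpos]
  have J : (s.card : ℝ≥0∞) * ENNReal.ofReal ((r / 2) ^ finrank ℝ E) ≤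
      ENNReal.ofReal ((R + r / 2) ^ finrank ℝ E) :=
    (ENNReal.mul_le_mul_iff_left (measure_ball_pos _ _ zero_lt_one).ne' measure_ball_lt_top.ne).1 I
  have K : (s.card : ℝ) * (r / 2) ^ finrank ℝ E ≤ (R + r / 2) ^ finrank ℝ E := by
    have := ENNReal.toReal_le_of_le_ofReal (pow_nonneg ρpos.le _) J
    rw [ENNReal.toReal_mul, ENNReal.toReal_ofReal (pow_nonneg δpos.le _)] at this
    simpa using this
  have hratio : (2 * R + r) / r = (R + r / 2) / (r / 2) := by
    field_simp
  rw [hratio, div_pow, le_div_iff₀ (by positivity)]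
  exact K

/-- `p : Fin n → X` lists the points of a finite set in an exact greedy permutation
order (0-based indexing): the points are distinct, and for each `i`, the point `p i`
attains the maximum distance to the prefix `P_i = {p j : j < i}` among all remaining
points `p k`, `k ≥ i`. -/
def IsGreedyPerm {X : Type*} [MetricSpace X] {n : ℕ} (p : Fin n → X) : Prop :=
  Function.Injective p ∧
    ∀ i k : Fin n, (i : ℕ) ≤ (k : ℕ) →
      Metric.infDist (p k) (p '' {j : Fin n | (j : ℕ) < (i : ℕ)}) ≤
        Metric.infDist (p i) (p '' {j : Fin n | (j : ℕ) < (i : ℕ)})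

/-- **The friend lists are small.** For an exact greedy permutation of `n ≥ 2` points
of `ℝ^d` with prefixes `P_{i-1}` and radii `r_{i-1} = dist(p_i, P_{i-1})`, the friend
list `F_i = {p_j : j < i, dist (p_j, p_i) ≤ 8 r_{i-1} / ε}` has at most `(1 + 16/ε)^d`
elements. (0-based indexing: the prefix of `p i` is `{p j : j < i}`.) -/
theorem stmt_4 (d : ℕ) (hd : 1 ≤ d) (ε : ℝ) (hε : ε ∈ Set.Ioo (0 : ℝ) 1)
    (n : ℕ) (hn : 2 ≤ n) (p : Fin n → EuclideanSpace ℝ (Fin d))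
    (hgp : IsGreedyPerm p) (i : Fin n) (hi : 1 ≤ (i : ℕ)) :
    (Nat.card {x : EuclideanSpace ℝ (Fin d) |
        ∃ j : Fin n, (j : ℕ) < (i : ℕ) ∧ x = p j ∧
          dist (p j) (p i) ≤
            8 * Metric.infDist (p i) (p '' {j : Fin n | (j : ℕ) < (i : ℕ)}) / ε} : ℝ)
      ≤ (1 + 16 / ε) ^ d := by
  obtain ⟨hinj, hgreedy⟩ := hgp
  obtain ⟨hε0, hε1⟩ := hε
  set r := Metric.infDist (p i) (p '' {j : Fin n | (j : ℕ) < (i : ℕ)}) with hrdef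
  have hQfin : (p '' {j : Fin n | (j : ℕ) < (i : ℕ)}).Finite :=
    Set.Finite.image p (Set.toFinite _)
  have hQne : (p '' {j : Fin n | (j : ℕ) < (i : ℕ)}).Nonempty :=
    ⟨p ⟨0, by omega⟩, ⟨0, by omega⟩, by show (0:ℕ) < (i:ℕ); omega, rfl⟩
  have hpiQ : p i ∉ p '' {j : Fin n | (j : ℕ) < (i : ℕ)} := by
    rintro ⟨j, hj, hje⟩
    have hj' : (j : ℕ) < (i : ℕ) := hj
    rw [hinj hje] at hj'
    exact lt_irrefl _ hj'
  have hrpos : 0 < r := (hQfin.isClosed.notMem_iff_infDist_pos hQne).1 hpiQ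
  have hR : 0 ≤ 8 * r / ε := by positivity
  -- separation of prefix points
  have hsep : ∀ j k : Fin n, (j : ℕ) < (k : ℕ) → (k : ℕ) < (i : ℕ) →
      r ≤ dist (p j) (p k) := by
    intro j k hjk hki
    have hne2 : (p '' {m : Fin n | (m : ℕ) < (k : ℕ)}).Nonempty := ⟨p j, j, hjk, rfl⟩
    have hsub : p '' {m : Fin n | (m : ℕ) < (k : ℕ)} ⊆
        p '' {m : Fin n | (m : ℕ) < (i : ℕ)} :=
      Set.image_mono fun m hm => lt_trans hm hki
    have h1 : r ≤ Metric.infDist (p i) (p '' {m : Fin n | (m : ℕ) < (k : ℕ)}) :=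
      Metric.infDist_le_infDist_of_subset hsub hne2
    have h2 := hgreedy k i (le_of_lt hki)
    have h3 : Metric.infDist (p k) (p '' {m : Fin n | (m : ℕ) < (k : ℕ)}) ≤ dist (p k) (p j) :=
      Metric.infDist_le_dist_of_mem ⟨j, hjk, rfl⟩
    rw [dist_comm]
    linarith
  -- the friend list as a finset
  classical
  set t : Finset (EuclideanSpace ℝ (Fin d)) :=
    (Finset.univ.filter
      (fun j : Fin n => (j : ℕ) < (i : ℕ) ∧ dist (p j) (p i) ≤ 8 * r / ε)).image p with htdef
  have hset : {x : EuclideanSpace ℝ (Fin d) |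
      ∃ j : Fin n, (j : ℕ) < (i : ℕ) ∧ x = p j ∧ dist (p j) (p i) ≤ 8 * r / ε} = ↑t := by
    ext x
    simp only [htdef, Set.mem_setOf_eq, Finset.coe_image, Finset.coe_filter, Finset.mem_univ,
      true_and, Set.mem_image, Set.mem_setOf_eq]
    constructor
    · rintro ⟨j, h1, h2, h3⟩; exact ⟨j, ⟨h1, h3⟩, h2.symm⟩
    · rintro ⟨j, ⟨h1, h3⟩, h2⟩; exact ⟨j, h1, h2.symm, h3⟩
  have hcard : Nat.card {x : EuclideanSpace ℝ (Fin d) |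
      ∃ j : Fin n, (j : ℕ) < (i : ℕ) ∧ x = p j ∧ dist (p j) (p i) ≤ 8 * r / ε} = t.card := by
    rw [Nat.card_coe_set_eq, hset, Set.ncard_coe_finset]
  rw [hcard]
  have hmain := pack_card_le t (p i) r (8 * r / ε) hrpos hR ?_ ?_
  · rw [finrank_euclideanSpace_fin] at hmain
    have hratio : (2 * (8 * r / ε) + r) / r = 1 + 16 / ε := by
      field_simp
      ring
    rwa [hratio] at hmain
  · intro c hc
    simp only [htdef, Finset.mem_image, Finset.mem_filter, Finset.mem_univ, true_and] at hc
    obtain ⟨j, ⟨-, hdist⟩, rfl⟩ := hc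
    exact hdist
  · intro c hc d' hd' hcd
    simp only [htdef, Finset.mem_image, Finset.mem_filter, Finset.mem_univ, true_and] at hc hd'
    obtain ⟨j, ⟨hj, -⟩, rfl⟩ := hc
    obtain ⟨k, ⟨hk, -⟩, rfl⟩ := hd'
    have hjk : j ≠ k := fun h => hcd (by rw [h])
    rcases lt_or_gt_of_ne (fun h : (j : ℕ) = (k : ℕ) => hjk (Fin.ext h)) with h | h
    · exact hsep j k h hk
    · rw [dist_comm]; exact hsep k j h hj
end

section
/- For every integer d ≥ 1 there is a constant C = C(d) > 0 such that the following holds. Let P ⊆ ℝ^d (with the Euclidean metric) be a finite set of n ≥ 2 points with spread Φ, and let ε ∈ (0,1). Then there exists a directed graph G = (P, E) such that: (a) |E| ≤ C·ε^{−d}·n·log₂(2Φ); (b) every vertex of G has out-degree at most C·ε^{−d}·log₂(2Φ); and (c) for every query point q ∈ ℝ^d and every p ∈ P with dist(q, p) > (1 + ε)·dist(q, P), there is a directed edge (p, p′) ∈ E with dist(q, p′) ≤ (ε/4)·dist(q, p) + dist(q, P). -/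
open Metric MeasureTheory Finset

/-- A maximal `δ`-separated subset of a finite set: pairwise distances `> δ`
and every point of `S` is within `δ` of the net. -/
lemma exists_net_aux {X : Type*} [MetricSpace X] (S : Finset X) (δ : ℝ) (hδ : 0 ≤ δ) :
    ∃ N ⊆ S, (∀ x ∈ N, ∀ y ∈ N, x ≠ y → δ < dist x y) ∧
      ∀ x ∈ S, ∃ y ∈ N, dist x y ≤ δ := by
  classical
  set T : Finset (Finset X) :=
    S.powerset.filter (fun N => ∀ x ∈ N, ∀ y ∈ N, x ≠ y → δ < dist x y) with hT
  have hTne : T.Nonempty := ⟨∅, by simp [hT]⟩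
  obtain ⟨N, hNT, hmax⟩ := T.exists_max_image Finset.card hTne
  simp only [hT, Finset.mem_filter, Finset.mem_powerset] at hNT
  refine ⟨N, hNT.1, hNT.2, ?_⟩
  intro x hx
  by_contra hcon
  push_neg at hcon
  have hxN : x ∉ N := by
    intro h
    have := hcon x h
    rw [dist_self] at this
    linarith
  have hins : insert x N ∈ T := by
    simp only [hT, Finset.mem_filter, Finset.mem_powerset]
    refine ⟨Finset.insert_subset hx hNT.1, ?_⟩
    intro a ha b hb hab
    rcases Finset.mem_insert.1 ha with ha' | ha'
    · subst ha'
      rcases Finset.mem_insert.1 hb with hb' | hb'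
      · exact absurd hb'.symm hab
      · exact hcon b hb'
    · rcases Finset.mem_insert.1 hb with hb' | hb'
      · rw [hb', dist_comm]; exact hcon a ha'
      · exact hNT.2 a ha' b hb' hab
  have := hmax _ hins
  rw [Finset.card_insert_of_notMem hxN] at this
  omega

/-- Volume packing bound: a `η`-separated subset of a ball of radius `R` in
`ℝ^d` has at most `((2R+η)/η)^d` points. -/
lemma packing_aux {d : ℕ} (s : Finset (EuclideanSpace ℝ (Fin d)))
    (x₀ : EuclideanSpace ℝ (Fin d)) (R η : ℝ) (hη : 0 < η) (hR0 : 0 ≤ R)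
    (hR : ∀ c ∈ s, dist c x₀ ≤ R)
    (hsep : ∀ c ∈ s, ∀ e ∈ s, c ≠ e → η < dist c e) :
    (s.card : ℝ) ≤ ((2 * R + η) / η) ^ d := by
  classical
  rcases s.eq_empty_or_nonempty with rfl | ⟨c₀, hc₀⟩
  · simp only [Finset.card_empty, Nat.cast_zero]
    positivity
  set μ : Measure (EuclideanSpace ℝ (Fin d)) := volume with hμ
  set A := ⋃ c ∈ s, ball c (η / 2) with hA
  have D : Set.Pairwise (s : Set (EuclideanSpace ℝ (Fin d))) (Function.onFun Disjoint fun c => ball c (η / 2)) := by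
    rintro c hc e he hce
    apply ball_disjoint_ball
    have := hsep c hc e he hce
    linarith
  have A_subset : A ⊆ ball x₀ (R + η / 2) := by
    refine Set.iUnion₂_subset fun x hx => ?_
    apply ball_subset_ball'
    have := hR x hx
    linarith
  have hfr : Module.finrank ℝ (EuclideanSpace ℝ (Fin d)) = d := finrank_euclideanSpace_fin
  have I : (s.card : ENNReal) * ENNReal.ofReal ((η / 2) ^ d) * μ (ball 0 1) ≤
      ENNReal.ofReal ((R + η / 2) ^ d) * μ (ball 0 1) := by
    calc (s.card : ENNReal) * ENNReal.ofReal ((η / 2) ^ d) * μ (ball 0 1) = μ A := by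
          rw [hA, measure_biUnion_finset D fun c _ => measurableSet_ball]
          have hη2 : 0 < η / 2 := by linarith
          simp only [μ.addHaar_ball_of_pos _ hη2, hfr]
          simp [Finset.sum_const, mul_assoc]
      _ ≤ μ (ball x₀ (R + η / 2)) := measure_mono A_subset
      _ = ENNReal.ofReal ((R + η / 2) ^ d) * μ (ball 0 1) := by
          rw [μ.addHaar_ball_of_pos _ (by linarith : (0:ℝ) < R + η / 2), hfr]
  have J : (s.card : ENNReal) * ENNReal.ofReal ((η / 2) ^ d) ≤
      ENNReal.ofReal ((R + η / 2) ^ d) :=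
    (ENNReal.mul_le_mul_iff_left (measure_ball_pos _ _ zero_lt_one).ne'
      measure_ball_lt_top.ne).1 I
  have K : (s.card : ℝ) * (η / 2) ^ d ≤ (R + η / 2) ^ d := by
    have h2 : (0:ℝ) ≤ (η/2)^d := by positivity
    have := ENNReal.toReal_le_of_le_ofReal (by positivity) J
    rw [ENNReal.toReal_mul, ENNReal.toReal_ofReal h2] at this
    simpa using this
  have hpow : (0:ℝ) < (η / 2) ^ d := by positivity
  have key : (s.card : ℝ) ≤ ((R + η/2)/(η/2))^d := by
    rw [div_pow, le_div_iff₀ hpow]; exact K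
  have heq : (R + η/2)/(η/2) = (2*R + η)/η := by
    field_simp
  rwa [heq] at key

/-- **WSPD-based navigable graph.** For every `d ≥ 1` there is `C = C(d) > 0` such
that for every finite `P ⊆ ℝ^d` with `n ≥ 2` points, spread `Φ`, and `ε ∈ (0,1)`,
there is a directed graph `E` on `P` with (a) `|E| ≤ C ε⁻ᵈ n log₂(2Φ)`,
(b) out-degrees at most `C ε⁻ᵈ log₂(2Φ)`, and (c) for every query `q` and every
`p ∈ P` with `dist q p > (1+ε) dist(q, P)` there is an edge `(p, p')` with
`dist q p' ≤ (ε/4) dist q p + dist(q, P)`. -/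
theorem stmt_6 (d : ℕ) (hd : 1 ≤ d) :
    ∃ C : ℝ, 0 < C ∧
      ∀ P : Finset (EuclideanSpace ℝ (Fin d)), 2 ≤ P.card →
      ∀ Φ : ℝ,
        Φ = Metric.diam (P : Set (EuclideanSpace ℝ (Fin d))) /
              sInf {r : ℝ | ∃ x ∈ P, ∃ y ∈ P, x ≠ y ∧ r = dist x y} →
      ∀ ε : ℝ, ε ∈ Set.Ioo (0 : ℝ) 1 →
      ∃ E : Finset (EuclideanSpace ℝ (Fin d) × EuclideanSpace ℝ (Fin d)),
        (∀ e ∈ E, e.1 ∈ P ∧ e.2 ∈ P) ∧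
        (E.card : ℝ) ≤ C / ε ^ d * P.card * Real.logb 2 (2 * Φ) ∧
        (∀ p ∈ P,
          (Nat.card {y : EuclideanSpace ℝ (Fin d) | (p, y) ∈ E} : ℝ) ≤
            C / ε ^ d * Real.logb 2 (2 * Φ)) ∧
        (∀ q : EuclideanSpace ℝ (Fin d), ∀ p ∈ P,
          (1 + ε) * Metric.infDist q (P : Set (EuclideanSpace ℝ (Fin d))) < dist q p →
          ∃ p', (p, p') ∈ E ∧
            dist q p' ≤ ε / 4 * dist q p +
              Metric.infDist q (P : Set (EuclideanSpace ℝ (Fin d)))) := by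
  classical
  refine ⟨2 * 33 ^ d, by positivity, ?_⟩
  intro P hP Φ hΦ ε hε
  obtain ⟨hε0, hε1⟩ := hε
  set S : Set ℝ := {r : ℝ | ∃ x ∈ P, ∃ y ∈ P, x ≠ y ∧ r = dist x y} with hS
  have hSfin : S.Finite := by
    have hsub : S ⊆ (fun p : EuclideanSpace ℝ (Fin d) × EuclideanSpace ℝ (Fin d) => dist p.1 p.2) '' ((↑P) ×ˢ (↑P)) := by
      rintro r ⟨x, hx, y, hy, hxy, rfl⟩
      exact ⟨(x, y), ⟨hx, hy⟩, rfl⟩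
    exact ((P.finite_toSet.prod P.finite_toSet).image _).subset hsub
  obtain ⟨x₀, hx₀, y₀, hy₀, hxy₀⟩ := Finset.one_lt_card.1 hP
  have hSne : S.Nonempty := ⟨dist x₀ y₀, x₀, hx₀, y₀, hy₀, hxy₀, rfl⟩
  set s := sInf S with hs
  have hs_mem : s ∈ S := hSne.csInf_mem hSfin
  have hs_pos : 0 < s := by
    obtain ⟨x, hx, y, hy, hxy, h⟩ := hs_mem
    rw [h]; exact dist_pos.2 hxy
  have hs_le : ∀ x ∈ P, ∀ y ∈ P, x ≠ y → s ≤ dist x y := fun x hx y hy hxy =>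
    csInf_le hSfin.bddBelow ⟨x, hx, y, hy, hxy, rfl⟩
  set D := Metric.diam (↑P : Set (EuclideanSpace ℝ (Fin d))) with hDdef
  have hbdd : Bornology.IsBounded (↑P : Set (EuclideanSpace ℝ (Fin d))) := P.finite_toSet.isBounded
  have hsD : s ≤ D := by
    obtain ⟨x, hx, y, hy, hxy, h⟩ := hs_mem
    rw [h]; exact Metric.dist_le_diam_of_mem hbdd hx hy
  have hΦ1 : 1 ≤ Φ := by rw [hΦ]; exact (one_le_div hs_pos).2 hsD
  have hD : D = Φ * s := by rw [hΦ]; field_simp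
  set K := ⌈Real.logb 2 Φ⌉₊ with hK
  have hΦK : Φ ≤ 2 ^ K := by
    have h1 : Real.logb 2 Φ ≤ (K : ℝ) := Nat.le_ceil _
    calc Φ = 2 ^ Real.logb 2 Φ :=
          (Real.rpow_logb two_pos (by norm_num) (by linarith)).symm
      _ ≤ 2 ^ (K : ℝ) := (Real.rpow_le_rpow_left_iff (by norm_num : (1:ℝ) < 2)).2 h1
      _ = 2 ^ K := by rw [Real.rpow_natCast]
  set t : ℕ → ℝ := fun i => s * 2 ^ i with ht
  have ht_pos : ∀ i, 0 < t i := fun i => by positivity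
  have net := fun (p : EuclideanSpace ℝ (Fin d)) (i : ℕ) =>
    exists_net_aux (P.filter (fun x => dist x p ≤ t i)) (ε * t i / 16)
      (by have := ht_pos i; positivity)
  choose N hNsub hNsep hNcov using net
  have hNP : ∀ p i, N p i ⊆ P := fun p i =>
    (hNsub p i).trans (Finset.filter_subset _ _)
  have hNcard : ∀ p i, ((N p i).card : ℝ) ≤ 33 ^ d / ε ^ d := by
    intro p i
    have hti := ht_pos i
    have hb := packing_aux (N p i) p (t i) (ε * t i / 16) (by positivity) hti.le
      (fun c hc => (Finset.mem_filter.1 (hNsub p i hc)).2) (hNsep p i)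
    refine hb.trans ?_
    have heq : (2 * t i + ε * t i / 16) / (ε * t i / 16) = (32 + ε) / ε := by
      field_simp
      ring
    rw [heq, ← div_pow]
    have h33 : (32 + ε) / ε ≤ 33 / ε := by
      gcongr
      linarith
    exact pow_le_pow_left₀ (by positivity) h33 d
  -- the edge set
  set E : Finset (EuclideanSpace ℝ (Fin d) × EuclideanSpace ℝ (Fin d)) :=
    P.biUnion (fun p => (Finset.range (K + 1)).biUnion
      (fun i => (N p i).image (fun y => (p, y)))) with hEdef
  have hmemE : ∀ a b, (a, b) ∈ E ↔ a ∈ P ∧ ∃ i < K + 1, b ∈ N a i := by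
    intro a b
    simp only [hEdef, Finset.mem_biUnion, Finset.mem_image, Finset.mem_range, Prod.mk.injEq]
    constructor
    · rintro ⟨p, hp, i, hi, y, hy, rfl, rfl⟩
      exact ⟨hp, i, hi, hy⟩
    · rintro ⟨ha, i, hi, hb⟩
      exact ⟨a, ha, i, hi, b, hb, rfl, rfl⟩
  -- log facts
  have hlog2 : Real.logb 2 (2 * Φ) = 1 + Real.logb 2 Φ := by
    rw [Real.logb_mul (by norm_num) (by linarith), Real.logb_self_eq_one (by norm_num)]
  have hlogb_nonneg : 0 ≤ Real.logb 2 Φ := Real.logb_nonneg (by norm_num) hΦ1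
  have hK_le : (K : ℝ) + 1 ≤ 2 * Real.logb 2 (2 * Φ) := by
    have h := Nat.ceil_lt_add_one hlogb_nonneg
    rw [hlog2, hK]
    push_cast
    linarith
  -- per-vertex bound on the sum of net sizes
  have hsum : ∀ p : EuclideanSpace ℝ (Fin d),
      (∑ i ∈ Finset.range (K + 1), ((N p i).card : ℝ)) ≤
        2 * 33 ^ d / ε ^ d * Real.logb 2 (2 * Φ) := by
    intro p
    calc ∑ i ∈ Finset.range (K + 1), ((N p i).card : ℝ)
        ≤ ∑ _i ∈ Finset.range (K + 1), (33 ^ d / ε ^ d : ℝ) :=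
          Finset.sum_le_sum (fun i _ => hNcard p i)
      _ = ((K : ℝ) + 1) * (33 ^ d / ε ^ d) := by
          rw [Finset.sum_const, Finset.card_range, nsmul_eq_mul]
          push_cast; ring
      _ ≤ (2 * Real.logb 2 (2 * Φ)) * (33 ^ d / ε ^ d) := by
          apply mul_le_mul_of_nonneg_right hK_le (by positivity)
      _ = 2 * 33 ^ d / ε ^ d * Real.logb 2 (2 * Φ) := by ring
  refine ⟨E, ?_, ?_, ?_, ?_⟩
  · rintro ⟨a, b⟩ hab
    obtain ⟨ha, i, _, hb⟩ := (hmemE a b).1 hab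
    exact ⟨ha, hNP a i hb⟩
  · -- total edge count
    have h1 : (E.card : ℝ) ≤ ∑ p ∈ P,
        (((Finset.range (K + 1)).biUnion
          (fun i => (N p i).image (fun y => (p, y)))).card : ℝ) := by
      rw [hEdef]
      exact_mod_cast Finset.card_biUnion_le
    have h2 : ∀ p ∈ P, (((Finset.range (K + 1)).biUnion
        (fun i => (N p i).image (fun y => (p, y)))).card : ℝ) ≤
          2 * 33 ^ d / ε ^ d * Real.logb 2 (2 * Φ) := by
      intro p _
      calc (((Finset.range (K + 1)).biUnion
            (fun i => (N p i).image (fun y => (p, y)))).card : ℝ)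
          ≤ ∑ i ∈ Finset.range (K + 1), (((N p i).image (fun y => (p, y))).card : ℝ) := by
            exact_mod_cast Finset.card_biUnion_le
        _ ≤ ∑ i ∈ Finset.range (K + 1), ((N p i).card : ℝ) :=
            Finset.sum_le_sum (fun i _ => by exact_mod_cast Finset.card_image_le)
        _ ≤ 2 * 33 ^ d / ε ^ d * Real.logb 2 (2 * Φ) := hsum p
    calc (E.card : ℝ) ≤ _ := h1
      _ ≤ ∑ _p ∈ P, (2 * 33 ^ d / ε ^ d * Real.logb 2 (2 * Φ)) := Finset.sum_le_sum h2
      _ = (P.card : ℝ) * (2 * 33 ^ d / ε ^ d * Real.logb 2 (2 * Φ)) := by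
          rw [Finset.sum_const, nsmul_eq_mul]
      _ = 2 * 33 ^ d / ε ^ d * (P.card : ℝ) * Real.logb 2 (2 * Φ) := by ring
  · -- out-degree
    intro p hp
    have hset : {y : EuclideanSpace ℝ (Fin d) | (p, y) ∈ E} =
        ((Finset.range (K + 1)).biUnion (N p) : Finset _) := by
      ext y
      simp only [Set.mem_setOf_eq, hmemE, Finset.coe_biUnion, Set.mem_iUnion,
        Finset.mem_coe, Finset.mem_range, Finset.mem_biUnion]
      constructor
      · rintro ⟨-, i, hi, hy⟩; exact ⟨i, hi, hy⟩
      · rintro ⟨i, hi, hy⟩; exact ⟨hp, i, hi, hy⟩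
    rw [hset, Finset.coe_sort_coe, Nat.card_eq_finsetCard]
    calc (((Finset.range (K + 1)).biUnion (N p)).card : ℝ)
        ≤ ∑ i ∈ Finset.range (K + 1), ((N p i).card : ℝ) := by
          exact_mod_cast Nat.cast_le.2 Finset.card_biUnion_le
      _ ≤ 2 * 33 ^ d / ε ^ d * Real.logb 2 (2 * Φ) := hsum p
  · -- navigability
    intro q p hp hfar
    set m := Metric.infDist q (↑P : Set (EuclideanSpace ℝ (Fin d))) with hm
    have hm0 : 0 ≤ m := Metric.infDist_nonneg
    obtain ⟨pstar, hpstar, hpdist⟩ :=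
      P.finite_toSet.isCompact.exists_infDist_eq_dist ⟨x₀, hx₀⟩ q
    have hpstar' : pstar ∈ P := hpstar
    have hmle : m ≤ dist q p := Metric.infDist_le_dist_of_mem hp
    have hne : p ≠ pstar := by
      rintro rfl
      rw [← hpdist] at hfar
      nlinarith
    set r := dist p pstar with hr
    have hrs : s ≤ r := hs_le p hp pstar hpstar' hne
    have hrD : r ≤ D := Metric.dist_le_diam_of_mem hbdd hp hpstar
    have hrpos : 0 < r := lt_of_lt_of_le hs_pos hrs
    have hrK : r ≤ t K := by
      have : Φ * s ≤ 2 ^ K * s := mul_le_mul_of_nonneg_right hΦK hs_pos.le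
      calc r ≤ D := hrD
        _ = Φ * s := hD
        _ ≤ 2 ^ K * s := this
        _ = t K := by rw [ht]; ring
    have hex : ∃ i, r ≤ t i := ⟨K, hrK⟩
    obtain ⟨i, hri, hiK, hmin⟩ : ∃ i, r ≤ t i ∧ i ≤ K ∧ ∀ j < i, ¬ r ≤ t j :=
      ⟨Nat.find hex, Nat.find_spec hex, Nat.find_min' hex hrK,
        fun j hj => Nat.find_min hex hj⟩
    have hti2r : t i ≤ 2 * r := by
      rcases Nat.eq_zero_or_pos i with h0 | h0
      · rw [h0]
        simp only [ht, pow_zero, mul_one]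
        linarith
      · obtain ⟨j, rfl⟩ := Nat.exists_eq_succ_of_ne_zero h0.ne'
        have hj : ¬ r ≤ t j := hmin j (Nat.lt_succ_self j)
        push_neg at hj
        have h2t : t (j + 1) = 2 * t j := by simp only [ht]; ring
        show t (j + 1) ≤ 2 * r
        linarith
    have hpstar_mem : pstar ∈ P.filter (fun x => dist x p ≤ t i) := by
      rw [Finset.mem_filter]
      exact ⟨hpstar', by rw [dist_comm]; exact hri⟩
    obtain ⟨p', hp'N, hp'cov⟩ := hNcov p i pstar hpstar_mem
    refine ⟨p', (hmemE p p').2 ⟨hp, i, Nat.lt_succ_of_le hiK, hp'N⟩, ?_⟩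
    have htri : dist q p' ≤ dist q pstar + dist pstar p' := dist_triangle _ _ _
    have hr2 : r ≤ dist q p + m := by
      calc r ≤ dist p q + dist q pstar := dist_triangle _ _ _
        _ = dist q p + m := by rw [dist_comm p q, ← hpdist]
    have h1 : ε * t i ≤ ε * (2 * r) := mul_le_mul_of_nonneg_left hti2r hε0.le
    have h2 : ε * r ≤ ε * (dist q p + m) := mul_le_mul_of_nonneg_left hr2 hε0.le
    have h3 : ε * (dist q p + m) ≤ ε * (2 * dist q p) :=
      mul_le_mul_of_nonneg_left (by linarith) hε0.le
    have := hpdist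
    linarith
end

section
/- Let ε ∈ (0,1), let ℓ ≥ 0, and let ℓ₀, ℓ₁, …, ℓ_N be nonnegative reals such that for every m < N with ℓ_m > (1+ε)·ℓ one has ℓ_{m+1} ≤ (ε/4)·ℓ_m + ℓ. Then for every m < N: (a) if ℓ_m > 8ℓ/ε then ℓ_{m+1} ≤ ε·ℓ_m; (b) if (1+ε)·ℓ < ℓ_m ≤ 8ℓ/ε then ℓ_{m+1} ≤ 3ℓ; and (c) if (1+ε)·ℓ < ℓ_m ≤ 3ℓ then ℓ_{m+1} ≤ (1+ε)·ℓ. Consequently, if ℓ > 0, ℓ₀ > ℓ, and N ≥ ⌈log(ℓ₀/ℓ)/log(1/ε)⌉ + 2, then there exists m ≤ N with ℓ_m ≤ (1+ε)·ℓ. -/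
/-!
Far from the query (`ℓ_m > 8ℓ/ε`) the additive term `ℓ` is dominated by `ε ℓ_m / 8`, so the
distance contracts by a factor `ε`. Once `ℓ_m ≤ 8ℓ/ε`, two further steps reach `3ℓ` and then
`(1+ε)ℓ`. Hence a walk that never becomes `(1+ε)`-approximate stays in the contracting regime up
to step `N - 2`, where `ℓ_{N-2} ≤ ε^(N-2) ℓ₀ ≤ ℓ` by the choice of `N`, a contradiction.
-/

/-- The step bound relating consecutive distances `x = ℓ_m`, `y = ℓ_{m+1}` of the walk. -/
def GreedyStep (ε ℓ x y : ℝ) : Prop :=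
  (1 + ε) * ℓ < x → y ≤ ε / 4 * x + ℓ

namespace GreedyStep

variable {ε ℓ x y : ℝ}

theorem le_mul_of_div_lt (hε : 0 < ε) (hε1 : ε ≤ 1) (hℓ : 0 ≤ ℓ)
    (h : GreedyStep ε ℓ x y) (hx : 8 * ℓ / ε < x) : y ≤ ε * x := by
  have hℓx : 8 * ℓ < x * ε := (div_lt_iff₀ hε).mp hx
  have hx0 : 0 ≤ x := (div_nonneg (by positivity) hε.le).trans hx.le
  have hfar : (1 + ε) * ℓ < x := by nlinarith
  have := h hfar
  nlinarith

theorem le_three_mul (hε : 0 < ε) (h : GreedyStep ε ℓ x y)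
    (hx₁ : (1 + ε) * ℓ < x) (hx₂ : x ≤ 8 * ℓ / ε) : y ≤ 3 * ℓ := by
  have : x * ε ≤ 8 * ℓ := (le_div_iff₀ hε).mp hx₂
  have := h hx₁
  nlinarith

theorem le_one_add_mul (hε : 0 ≤ ε) (hℓ : 0 ≤ ℓ) (h : GreedyStep ε ℓ x y)
    (hx₁ : (1 + ε) * ℓ < x) (hx₂ : x ≤ 3 * ℓ) : y ≤ (1 + ε) * ℓ := by
  have := h hx₁
  nlinarith [mul_nonneg hε hℓ]

end GreedyStep

theorem pow_mul_le_of_ceil_log_div_le {ε ℓ a : ℝ} (hε : 0 < ε) (hε1 : ε < 1) (hℓ : 0 < ℓ)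
    (ha : 0 < a) {K : ℕ} (hK : ⌈Real.log (a / ℓ) / Real.log (1 / ε)⌉ ≤ (K : ℤ)) :
    ε ^ K * a ≤ ℓ := by
  have hlogε : 0 < Real.log (1 / ε) := Real.log_pos (one_lt_one_div hε hε1)
  have hlog : Real.log (a / ℓ) ≤ Real.log ((1 / ε) ^ K) := by
    rw [Real.log_pow, ← div_le_iff₀ hlogε]
    exact_mod_cast Int.ceil_le.mp hK
  have : a / ℓ ≤ 1 / ε ^ K := by
    rwa [Real.log_le_log_iff (by positivity) (by positivity), one_div_pow] at hlog
  rw [div_le_div_iff₀ hℓ (by positivity)] at this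
  linarith

section Walk

variable {ε ℓ : ℝ} {N : ℕ} {l : ℕ → ℝ}

theorem div_lt_of_forall_one_add_mul_lt (hε : 0 < ε) (hℓ : 0 ≤ ℓ)
    (hstep : ∀ m < N, GreedyStep ε ℓ (l m) (l (m + 1)))
    (hfar : ∀ m ≤ N, (1 + ε) * ℓ < l m) {m : ℕ} (hm : m + 2 ≤ N) : 8 * ℓ / ε < l m := by
  by_contra! hle
  have h₁ := (hstep m (by omega)).le_three_mul hε (hfar m (by omega)) hle
  have h₂ := (hstep (m + 1) (by omega)).le_one_add_mul hε.le hℓ (hfar (m + 1) (by omega)) h₁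
  linarith [hfar (m + 2) hm]

theorem le_pow_mul_of_forall_lt (hε : 0 < ε) (hε1 : ε ≤ 1) (hℓ : 0 ≤ ℓ)
    (hstep : ∀ m < N, GreedyStep ε ℓ (l m) (l (m + 1)))
    (hfar : ∀ m ≤ N, (1 + ε) * ℓ < l m) {m : ℕ} (hm : m + 2 ≤ N) : l m ≤ ε ^ m * l 0 := by
  induction m with
  | zero => simp
  | succ m ih =>
    have hcontract := (hstep m (by omega)).le_mul_of_div_lt hε hε1 hℓ
      (div_lt_of_forall_one_add_mul_lt hε hℓ hstep hfar (by omega))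
    calc l (m + 1) ≤ ε * l m := hcontract
      _ ≤ ε * (ε ^ m * l 0) := mul_le_mul_of_nonneg_left (ih (by omega)) hε.le
      _ = ε ^ (m + 1) * l 0 := by ring

theorem exists_le_one_add_mul_of_pow_mul_le (hε : 0 < ε) (hε1 : ε ≤ 1) (hℓ : 0 ≤ ℓ)
    (hstep : ∀ m < N, GreedyStep ε ℓ (l m) (l (m + 1)))
    {K : ℕ} (hK : K + 2 ≤ N) (hKl : ε ^ K * l 0 ≤ ℓ) : ∃ m ≤ N, l m ≤ (1 + ε) * ℓ := by
  by_contra! hfar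
  have hlt := div_lt_of_forall_one_add_mul_lt hε hℓ hstep hfar hK
  have hle := le_pow_mul_of_forall_lt hε hε1 hℓ hstep hfar hK
  have : ℓ ≤ 8 * ℓ / ε := by
    rw [le_div_iff₀ hε]
    nlinarith
  linarith

end Walk

theorem stmt_7_general (ε ℓ : ℝ) (hε : ε ∈ Set.Ioo (0 : ℝ) 1) (hℓ : 0 ≤ ℓ)
    (N : ℕ) (l : ℕ → ℝ)
    (hstep : ∀ m < N, (1 + ε) * ℓ < l m → l (m + 1) ≤ ε / 4 * l m + ℓ) :
    (∀ m < N,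
      (8 * ℓ / ε < l m → l (m + 1) ≤ ε * l m) ∧
      ((1 + ε) * ℓ < l m ∧ l m ≤ 8 * ℓ / ε → l (m + 1) ≤ 3 * ℓ) ∧
      ((1 + ε) * ℓ < l m ∧ l m ≤ 3 * ℓ → l (m + 1) ≤ (1 + ε) * ℓ)) ∧
    (0 < ℓ → ℓ < l 0 →
      (⌈Real.log (l 0 / ℓ) / Real.log (1 / ε)⌉ + 2 ≤ (N : ℤ)) →
      ∃ m ≤ N, l m ≤ (1 + ε) * ℓ) := by
  obtain ⟨hε0, hε1⟩ := hε
  have hstep' : ∀ m < N, GreedyStep ε ℓ (l m) (l (m + 1)) := hstep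
  refine ⟨fun m hm => ⟨(hstep' m hm).le_mul_of_div_lt hε0 hε1.le hℓ,
    fun h => (hstep' m hm).le_three_mul hε0 h.1 h.2,
    fun h => (hstep' m hm).le_one_add_mul hε0.le hℓ h.1 h.2⟩, ?_⟩
  intro hℓ0 hl0 hN
  set k := ⌈Real.log (l 0 / ℓ) / Real.log (1 / ε)⌉
  have hk : 0 ≤ k := Int.ceil_nonneg <| div_nonneg
    (Real.log_nonneg ((one_le_div hℓ0).mpr hl0.le)) (Real.log_nonneg (by bound))
  exact exists_le_one_add_mul_of_pow_mul_le hε0 hε1.le hℓ hstep' (K := k.toNat) (by omega)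
    (pow_mul_le_of_ceil_log_div_le hε0 hε1 hℓ0 (hℓ0.trans hl0) (Int.self_le_toNat k))

/-- **Iteration-count analysis of the greedy walk.** Let `ε ∈ (0,1)`, `ℓ ≥ 0`, and
let `ℓ₀, …, ℓ_N` be nonnegative reals with `ℓ_{m+1} ≤ (ε/4) ℓ_m + ℓ` whenever
`m < N` and `ℓ_m > (1+ε) ℓ`. Then for every `m < N`: (a) if `ℓ_m > 8ℓ/ε` then
`ℓ_{m+1} ≤ ε ℓ_m`; (b) if `(1+ε)ℓ < ℓ_m ≤ 8ℓ/ε` then `ℓ_{m+1} ≤ 3ℓ`; (c) if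
`(1+ε)ℓ < ℓ_m ≤ 3ℓ` then `ℓ_{m+1} ≤ (1+ε)ℓ`. Consequently, if `ℓ > 0`, `ℓ₀ > ℓ`
and `N ≥ ⌈log(ℓ₀/ℓ)/log(1/ε)⌉ + 2`, then some `ℓ_m` with `m ≤ N` satisfies
`ℓ_m ≤ (1+ε)ℓ`. -/
theorem stmt_7 (ε ℓ : ℝ) (hε : ε ∈ Set.Ioo (0 : ℝ) 1) (hℓ : 0 ≤ ℓ)
    (N : ℕ) (l : ℕ → ℝ) (hnonneg : ∀ m ≤ N, 0 ≤ l m)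
    (hstep : ∀ m < N, (1 + ε) * ℓ < l m → l (m + 1) ≤ ε / 4 * l m + ℓ) :
    (∀ m < N,
      (8 * ℓ / ε < l m → l (m + 1) ≤ ε * l m) ∧
      ((1 + ε) * ℓ < l m ∧ l m ≤ 8 * ℓ / ε → l (m + 1) ≤ 3 * ℓ) ∧
      ((1 + ε) * ℓ < l m ∧ l m ≤ 3 * ℓ → l (m + 1) ≤ (1 + ε) * ℓ)) ∧
    (0 < ℓ → ℓ < l 0 →
      (⌈Real.log (l 0 / ℓ) / Real.log (1 / ε)⌉ + 2 ≤ (N : ℤ)) →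
      ∃ m ≤ N, l m ≤ (1 + ε) * ℓ) :=
  stmt_7_general ε ℓ hε hℓ N l hstep
end

section
/- Let (X, d) be a metric space, let P = {p₁, …, p_n} be a finite set of n ≥ 2 points of X listed in an exact greedy permutation order with prefixes P_i = {p₁, …, p_i}, and let ε ∈ (0, 1/2]. Let q ∈ X, let t ∈ P be a nearest neighbor of q in P, and let j be an index with L := d(q, p_j) > (1+ε)·d(q, P). Set ψ = (ε/4)·L and let α be the smallest index with d(p_α, t) ≤ ψ (α exists since d(t, t) = 0). Then: (i) d(q, p_α) ≤ (1 − ε/4)·L; and (ii) if α ≥ 2, then d(p_j, p_α) ≤ (8/ε)·r_{α−1}, where r_{α−1} = d(p_α, P_{α−1}). In particular, if j < α, the pair (p_j, p_α) satisfies the edge condition d(p_j, p_α) ≤ 8·r_{α−1}/ε of the greedy-permutation graph. -/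
open Metric

theorem le_one_sub_half_mul_of_one_add_mul_lt {ε D L : ℝ} (hε₀ : 0 ≤ ε) (hε₁ : ε ≤ 1)
    (hD : 0 ≤ D) (h : (1 + ε) * D < L) : D ≤ (1 - ε / 2) * L := by
  nlinarith [mul_nonneg (mul_nonneg hε₀ (sub_nonneg.mpr hε₁)) hD]

theorem le_infDist_image_of_forall_lt_dist {X : Type*} [MetricSpace X] {n : ℕ}
    {p : Fin n → X} {α : Fin n} (hα : 1 ≤ (α : ℕ)) {x : X} {ψ : ℝ}
    (hfar : ∀ β : Fin n, (β : ℕ) < α → ψ < dist (p β) x) :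
    ψ ≤ infDist x (p '' {i : Fin n | (i : ℕ) < (α : ℕ)}) := by
  have hne : (p '' {i : Fin n | (i : ℕ) < (α : ℕ)}).Nonempty := ⟨_, ⟨0, α.pos⟩, hα, rfl⟩
  rw [le_infDist hne]
  rintro _ ⟨β, hβ, rfl⟩
  exact (dist_comm x (p β) ▸ hfar β hβ).le

theorem IsGreedyPerm.le_infDist_prefix {X : Type*} [MetricSpace X] {n : ℕ} {p : Fin n → X}
    (hp : IsGreedyPerm p) {α t : Fin n} (hα : 1 ≤ (α : ℕ)) {ψ : ℝ} (hψ : 0 ≤ ψ)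
    (hfar : ∀ β : Fin n, (β : ℕ) < α → ψ < dist (p β) (p t)) :
    ψ ≤ infDist (p α) (p '' {i : Fin n | (i : ℕ) < (α : ℕ)}) := by
  have hαt : (α : ℕ) ≤ t := le_of_not_gt fun h => by simpa using (hψ.trans_lt (hfar t h))
  exact (le_infDist_image_of_forall_lt_dist hα hfar).trans (hp.2 α t hαt)

theorem stmt_9_general {X : Type*} [MetricSpace X] (n : ℕ)
    (p : Fin n → X) (hgp : IsGreedyPerm p)
    (ε : ℝ) (hε : ε ∈ Set.Ioc (0 : ℝ) (1 / 2))
    (q : X) (t : Fin n) (ht : dist q (p t) = Metric.infDist q (Set.range p))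
    (j : Fin n) (hL : (1 + ε) * Metric.infDist q (Set.range p) < dist q (p j))
    (α : Fin n) (hα : dist (p α) (p t) ≤ ε / 4 * dist q (p j))
    (hαmin : ∀ β : Fin n, (β : ℕ) < (α : ℕ) →
      ¬(dist (p β) (p t) ≤ ε / 4 * dist q (p j))) :
    dist q (p α) ≤ (1 - ε / 4) * dist q (p j) ∧
    (1 ≤ (α : ℕ) →
      dist (p j) (p α) ≤
        8 / ε * Metric.infDist (p α) (p '' {i : Fin n | (i : ℕ) < (α : ℕ)})) := by
  obtain ⟨hε₀, hε₁⟩ := hε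
  set L := dist q (p j)
  have hqt : dist q (p t) ≤ (1 - ε / 2) * L :=
    ht ▸ le_one_sub_half_mul_of_one_add_mul_lt hε₀.le (by linarith) infDist_nonneg hL
  have part_i : dist q (p α) ≤ (1 - ε / 4) * L := by
    linarith [dist_triangle_right q (p α) (p t)]
  refine ⟨part_i, fun hα1 => ?_⟩
  have hr := hgp.le_infDist_prefix hα1 (dist_nonneg.trans hα) fun β hβ => not_le.mp (hαmin β hβ)
  calc dist (p j) (p α) ≤ L + (1 - ε / 4) * L := by
        linarith [dist_triangle (p j) q (p α), dist_comm (p j) q]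
    _ ≤ 2 * L := by nlinarith [mul_nonneg hε₀.le (dist_nonneg (x := q) (y := p j))]
    _ = 8 / ε * (ε / 4 * L) := by field_simp; ring
    _ ≤ _ := by gcongr

/-- **Key step of greedy routing on the greedy-permutation graph.** For an exact
greedy permutation of `n ≥ 2` points, `ε ∈ (0,1/2]`, a query `q` with nearest
neighbor `p t`, and an index `j` with `L := d(q, p_j) > (1+ε) d(q,P)`, let `α` be the
smallest index with `d(p_α, p_t) ≤ ψ := (ε/4) L`. Then (i) `d(q, p_α) ≤ (1-ε/4) L`,
and (ii) if `α ≥ 1` (0-based, i.e. `α ≥ 2` 1-based) then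
`d(p_j, p_α) ≤ (8/ε) r_{α-1}` where `r_{α-1} = d(p_α, P_{α-1})`
(here `P_{α-1} = {p i : i < α}` in 0-based indexing). -/
theorem stmt_9 {X : Type*} [MetricSpace X] (n : ℕ) (hn : 2 ≤ n)
    (p : Fin n → X) (hgp : IsGreedyPerm p)
    (ε : ℝ) (hε : ε ∈ Set.Ioc (0 : ℝ) (1 / 2))
    (q : X) (t : Fin n) (ht : dist q (p t) = Metric.infDist q (Set.range p))
    (j : Fin n) (hL : (1 + ε) * Metric.infDist q (Set.range p) < dist q (p j))
    (α : Fin n) (hα : dist (p α) (p t) ≤ ε / 4 * dist q (p j))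
    (hαmin : ∀ β : Fin n, (β : ℕ) < (α : ℕ) →
      ¬(dist (p β) (p t) ≤ ε / 4 * dist q (p j))) :
    dist q (p α) ≤ (1 - ε / 4) * dist q (p j) ∧
    (1 ≤ (α : ℕ) →
      dist (p j) (p α) ≤
        8 / ε * Metric.infDist (p α) (p '' {i : Fin n | (i : ℕ) < (α : ℕ)})) :=
  stmt_9_general n p hgp ε hε q t ht j hL α hα hαmin
end

section
/- For every integer d ≥ 1 there is a constant C = C(d) > 0 such that the following holds. Let P ⊆ ℝ^d (with the Euclidean metric) be a finite set of n ≥ 2 points with spread Φ, let ε ∈ (0, 1/2], let p₁, …, p_n be an exact greedy permutation of P with prefixes P_i = {p₁, …, p_i} and radii r_{i−1} = dist(p_i, P_{i−1}), and let G = (P, E) be the directed graph with E = {(p_j, p_i) : j < i and dist(p_j, p_i) ≤ 8·r_{i−1}/ε}. Then: (a) |E| ≤ C·n·ε^{−d}; and (b) for every query point q ∈ ℝ^d, every maximal first-improving greedy walk v₀ = p₁, v₁, v₂, … in G — namely, the walk in which v_{m+1} is the out-neighbor p_i of v_m of smallest index i among those satisfying dist(q, p_i) ≤ (1 − ε/4)·dist(q,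 v_m), and the walk stops at a vertex having no out-neighbor u with dist(q, u) ≤ (1 − ε/4)·dist(q, current vertex) — is finite, has at most C·ε^{−1}·(1 + log₂(1 + Φ)) steps, and its final vertex v_k satisfies dist(q, v_k) ≤ (1 + ε)·dist(q, P). -/
/-- The radius `r_{i-1} = dist(p_i, P_{i-1})` of the greedy permutation, in 0-based
indexing: the distance of `p i` to the prefix `{p j : j < i}`. -/
noncomputable def gpRadius {X : Type*} [MetricSpace X] {n : ℕ} (p : Fin n → X)
    (i : Fin n) : ℝ :=
  Metric.infDist (p i) (p '' {j : Fin n | (j : ℕ) < (i : ℕ)})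

/-- The greedy-permutation graph: a directed edge from `p j` to `p i` whenever
`j < i` and `dist (p j) (p i) ≤ 8 r_{i-1} / ε`. -/
def gpEdge {X : Type*} [MetricSpace X] {n : ℕ} (p : Fin n → X) (ε : ℝ)
    (j i : Fin n) : Prop :=
  (j : ℕ) < (i : ℕ) ∧ dist (p j) (p i) ≤ 8 * gpRadius p i / ε

/-!
(a) The in-neighbours of `p i` lie within `8 r / ε` of `p i`, where `r = gpRadius p i`, and they
are pairwise `r`-separated, because greedy radii decrease. A volume comparison of disjoint balls
bounds their number by `(17 / ε) ^ d`.

(b) Along the walk the distance to `q` shrinks geometrically by the factor `1 - ε / 4`, and it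
cannot drop below half the closest-pair distance before the last step, nor start above the
current distance plus the diameter; this bounds the number of steps by `O(ε⁻¹ log Φ)`.
For the approximation, suppose the walk is at `u` with `dist q u = δ > (1 + ε) dist(q, P)`.
The greedy prefix before the first radius below `ε δ / 4` is an `ε δ / 4`-net, so it contains
a point `b` improving on `u` whose radius, like all earlier ones, is at least `ε δ / 4`; this
radius makes `b` an out-neighbour of `u`, provided `b` comes after `u`. That holds because, by
induction along the walk, no point up to the current vertex improves on it: a skipped improving
point would itself have been an out-neighbour preceding the chosen one.
-/

open Metric MeasureTheory

theorem card_mul_pow_le_of_pairwise_le_dist {E : Type*} [NormedAddCommGroup E] [NormedSpace ℝ E]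
    [FiniteDimensional ℝ E] (s : Finset E) {c : E} {r R : ℝ} (hr : 0 < r) (hR : 0 ≤ R)
    (hs : ∀ x ∈ s, dist x c ≤ R) (hsep : (s : Set E).Pairwise fun x y => r ≤ dist x y) :
    s.card * (r / 2) ^ Module.finrank ℝ E ≤ (R + r / 2) ^ Module.finrank ℝ E := by
  borelize E
  set μ : Measure E := Measure.addHaar
  have hμ : ∀ x : E, ∀ ρ > 0,
      μ (ball x ρ) = ENNReal.ofReal (ρ ^ Module.finrank ℝ E) * μ (ball 0 1) :=
    fun x _ hρ => Measure.addHaar_ball_of_pos μ x hρ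
  -- disjoint balls of radius `r / 2` around the points of `s` fit in one ball of radius `R + r / 2`
  have hvol : s.card * (ENNReal.ofReal ((r / 2) ^ Module.finrank ℝ E) * μ (ball 0 1)) ≤
      ENNReal.ofReal ((R + r / 2) ^ Module.finrank ℝ E) * μ (ball 0 1) :=
    calc s.card * (ENNReal.ofReal ((r / 2) ^ Module.finrank ℝ E) * μ (ball 0 1))
        = ∑ x ∈ s, μ (ball x (r / 2)) := by
          simp only [hμ _ _ (half_pos hr), Finset.sum_const, nsmul_eq_mul]
      _ = μ (⋃ x ∈ s, ball x (r / 2)) :=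
          (measure_biUnion_finset (fun x hx y hy hxy => ball_disjoint_ball (by
            linarith [hsep hx hy hxy])) fun _ _ => measurableSet_ball).symm
      _ ≤ μ (ball c (R + r / 2)) := measure_mono <| Set.iUnion₂_subset fun x hx =>
          ball_subset_ball' (by linarith [hs x hx])
      _ = _ := hμ c _ (by positivity)
  rw [← mul_assoc, ENNReal.mul_le_mul_iff_left (measure_ball_pos μ 0 one_pos).ne'
    measure_ball_lt_top.ne, ← ENNReal.ofReal_natCast, ← ENNReal.ofReal_mul (by positivity)] at hvol
  exact (ENNReal.ofReal_le_ofReal_iff (by positivity)).mp hvol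

theorem image_prefix_nonempty {X : Type*} {n : ℕ} (p : Fin n → X) {a : Fin n} (ha : 0 < (a : ℕ)) :
    (p '' {j : Fin n | (j : ℕ) < a}).Nonempty :=
  ⟨p ⟨0, a.pos⟩, ⟨0, a.pos⟩, ha, rfl⟩

section GreedyPerm

variable {X : Type*} [MetricSpace X] {n : ℕ} {p : Fin n → X}

theorem gpRadius_le_dist {a b : Fin n} (hab : (a : ℕ) < b) : gpRadius p b ≤ dist (p a) (p b) := by
  rw [dist_comm]
  exact infDist_le_dist_of_mem ⟨a, hab, rfl⟩

namespace IsGreedyPerm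

theorem gpRadius_le_gpRadius (hp : IsGreedyPerm p) {a b : Fin n} (ha : 0 < (a : ℕ))
    (hab : (a : ℕ) ≤ b) : gpRadius p b ≤ gpRadius p a :=
  calc gpRadius p b ≤ infDist (p b) (p '' {j : Fin n | (j : ℕ) < a}) :=
        infDist_le_infDist_of_subset (Set.image_mono fun _ hj => hj.trans_le hab)
          (image_prefix_nonempty p ha)
    _ ≤ gpRadius p a := hp.2 a b hab

theorem gpRadius_pos (hp : IsGreedyPerm p) {a : Fin n} (ha : 0 < (a : ℕ)) : 0 < gpRadius p a := by
  rw [gpRadius, ← infDist_pos_iff_notMem_closure (image_prefix_nonempty p ha),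
    (Set.toFinite _).isClosed.closure_eq]
  rintro ⟨j, hj, hja⟩
  exact (hp.1 hja ▸ hj : (a : ℕ) < a).false

theorem gpRadius_le_dist_of_lt_of_lt (hp : IsGreedyPerm p) {i j j' : Fin n} (hj : (j : ℕ) < i)
    (hj' : (j' : ℕ) < i) (hne : j ≠ j') : gpRadius p i ≤ dist (p j) (p j') := by
  rcases lt_or_gt_of_ne (Fin.val_ne_of_ne hne) with h | h
  · exact (hp.gpRadius_le_gpRadius (by omega) hj'.le).trans (gpRadius_le_dist h)
  · exact (hp.gpRadius_le_gpRadius (by omega) hj.le).trans (dist_comm (p j) _ ▸ gpRadius_le_dist h)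

end IsGreedyPerm

end GreedyPerm

section EdgeCount

variable {E : Type*} [NormedAddCommGroup E] [NormedSpace ℝ E] [FiniteDimensional ℝ E] {n : ℕ}
  {p : Fin n → E} {ε : ℝ}

theorem IsGreedyPerm.ncard_gpEdge_le (hp : IsGreedyPerm p) (hε : 0 < ε) (hε1 : ε ≤ 1) (i : Fin n) :
    ({j | gpEdge p ε j i}.ncard : ℝ) ≤ (17 / ε) ^ Module.finrank ℝ E := by
  classical
  set d := Module.finrank ℝ E
  set J := Finset.univ.filter fun j => gpEdge p ε j i
  rw [show {j | gpEdge p ε j i} = (J : Set (Fin n)) by ext; simp [J], Set.ncard_coe_finset]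
  rcases J.eq_empty_or_nonempty with hJ | ⟨j₀, hj₀⟩
  · simp [hJ]; positivity
  have hj₀ : gpEdge p ε j₀ i := (Finset.mem_filter.mp hj₀).2
  set r := gpRadius p i
  have hr : 0 < r := hp.gpRadius_pos (Nat.zero_le _ |>.trans_lt hj₀.1)
  have hpack := card_mul_pow_le_of_pairwise_le_dist (J.image p) (c := p i) (R := 8 * r / ε) hr
    (by positivity)
    (by simpa [J] using fun j (hj : gpEdge p ε j i) => hj.2)
    (by
      simp only [Finset.coe_image, J, Finset.coe_filter, Finset.mem_univ, true_and]
      rintro _ ⟨j, hj, rfl⟩ _ ⟨j', hj', rfl⟩ hne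
      exact hp.gpRadius_le_dist_of_lt_of_lt hj.1 hj'.1 (ne_of_apply_ne p hne))
  rw [Finset.card_image_of_injective J hp.1] at hpack
  have hR : 8 * r / ε + r / 2 ≤ r / 2 * (17 / ε) := by
    have : r / 2 ≤ r / 2 / ε := le_div_self (by positivity) hε hε1
    linarith [show r / 2 * (17 / ε) = 8 * r / ε + r / 2 / ε by ring]
  have := hpack.trans (pow_le_pow_left₀ (by positivity) hR d)
  rw [mul_pow, mul_comm] at this
  exact le_of_mul_le_mul_left this (by positivity)

theorem IsGreedyPerm.card_gpEdge_le (hp : IsGreedyPerm p) (hε : 0 < ε) (hε1 : ε ≤ 1) :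
    (Nat.card {e : Fin n × Fin n | gpEdge p ε e.1 e.2} : ℝ) ≤
      n * (17 / ε) ^ Module.finrank ℝ E := by
  classical
  calc (Nat.card {e : Fin n × Fin n | gpEdge p ε e.1 e.2} : ℝ)
      = ∑ i : Fin n, ({j | gpEdge p ε j i}.ncard : ℝ) := by
        simp only [Nat.card_coe_set_eq, Set.ncard_eq_toFinset_card', Set.toFinset_ofPred,
          Finset.card_filter, Fintype.sum_prod_type_right]
        push_cast; rfl
    _ ≤ ∑ _i : Fin n, (17 / ε) ^ Module.finrank ℝ E :=
        Finset.sum_le_sum fun i _ => hp.ncard_gpEdge_le hε hε1 i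
    _ = n * (17 / ε) ^ Module.finrank ℝ E := by simp

end EdgeCount

section Walk

variable {X : Type*} [MetricSpace X] {n : ℕ}

noncomputable def closestPairDist (p : Fin n → X) : ℝ :=
  sInf {r : ℝ | ∃ a b : Fin n, a ≠ b ∧ r = dist (p a) (p b)}

noncomputable def spread (p : Fin n → X) : ℝ :=
  diam (Set.range p) / closestPairDist p

def IsFirstImprovingWalk (p : Fin n → X) (ε : ℝ) (q : X) (v : ℕ → Fin n) (k : ℕ) : Prop :=
  ∀ m < k,
    gpEdge p ε (v m) (v (m + 1)) ∧
    dist q (p (v (m + 1))) ≤ (1 - ε / 4) * dist q (p (v m)) ∧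
    ∀ i : Fin n, gpEdge p ε (v m) i →
      dist q (p i) ≤ (1 - ε / 4) * dist q (p (v m)) → (v (m + 1) : ℕ) ≤ (i : ℕ)

variable {p : Fin n → X}

theorem closestPairDist_nonneg : 0 ≤ closestPairDist p :=
  Real.sInf_nonneg <| by rintro _ ⟨a, b, -, rfl⟩; exact dist_nonneg

theorem finite_setOf_dist (p : Fin n → X) :
    {r : ℝ | ∃ a b : Fin n, a ≠ b ∧ r = dist (p a) (p b)}.Finite :=
  (Set.finite_range fun e : Fin n × Fin n => dist (p e.1) (p e.2)).subset
    (by rintro _ ⟨a, b, -, rfl⟩; exact ⟨(a, b), rfl⟩)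

theorem closestPairDist_le_dist {a b : Fin n} (hab : a ≠ b) :
    closestPairDist p ≤ dist (p a) (p b) :=
  csInf_le (finite_setOf_dist p).bddBelow ⟨a, b, hab, rfl⟩

theorem closestPairDist_pos (hp : Function.Injective p) {a b : Fin n} (hab : a ≠ b) :
    0 < closestPairDist p := by
  obtain ⟨a', b', hne, h⟩ :=
    Set.Nonempty.csInf_mem (s := {r : ℝ | ∃ a b : Fin n, a ≠ b ∧ r = dist (p a) (p b)})
      ⟨_, a, b, hab, rfl⟩ (finite_setOf_dist p)
  rw [closestPairDist, h]
  exact dist_pos.mpr (hp.ne hne)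

theorem spread_nonneg : 0 ≤ spread p := div_nonneg diam_nonneg closestPairDist_nonneg

theorem diam_le_spread_mul_dist (hp : Function.Injective p) {a b : Fin n} (hab : a ≠ b) :
    diam (Set.range p) ≤ spread p * dist (p a) (p b) := by
  rw [spread, div_mul_eq_mul_div, le_div_iff₀ (closestPairDist_pos hp hab)]
  exact mul_le_mul_of_nonneg_left (closestPairDist_le_dist hab) diam_nonneg

theorem one_le_pow_mul_spread {β : ℝ} (hβ : 0 ≤ β) (hβ1 : β ≤ 1)
    (hp : Function.Injective p) (q : X) (v : ℕ → Fin n) (j : ℕ) (hj : v j ≠ v (j + 1))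
    (hv : ∀ m < j + 1, dist q (p (v (m + 1))) ≤ β * dist q (p (v m))) :
    1 ≤ β ^ j * (1 + 2 * spread p) := by
  set δ : ℕ → ℝ := fun m => dist q (p (v m))
  have hgeom : δ j ≤ β ^ j * δ 0 := le_geom hβ j fun m hm => hv m (by omega)
  have hstart : δ 0 ≤ δ j + diam (Set.range p) := by
    have := dist_le_diam_of_mem (Set.finite_range p).isBounded
      (Set.mem_range_self (v j)) (Set.mem_range_self (v 0))
    linarith [dist_triangle q (p (v j)) (p (v 0))]
  -- the last step joins two distinct points, both within `δ j` of `q`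
  have hlast : dist (p (v j)) (p (v (j + 1))) ≤ 2 * δ j := by
    have := hv j (by omega)
    have := dist_triangle_left (p (v j)) (p (v (j + 1))) q
    nlinarith [dist_nonneg (x := q) (y := p (v j))]
  have hpos : 0 < δ j := by
    have := dist_pos.mpr (hp.ne hj)
    linarith
  have hdiam : diam (Set.range p) ≤ 2 * spread p * δ j := by
    have := diam_le_spread_mul_dist hp hj
    nlinarith [spread_nonneg (p := p)]
  have : δ j * 1 ≤ δ j * (β ^ j * (1 + 2 * spread p)) := by
    nlinarith [pow_nonneg hβ j]
  exact le_of_mul_le_mul_left this hpos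

theorem add_one_le_of_one_le_pow_mul {ε Φ : ℝ} {j : ℕ} (hε : 0 < ε) (hε1 : ε ≤ 1) (hΦ : 0 ≤ Φ)
    (h : 1 ≤ (1 - ε / 4) ^ j * (1 + 2 * Φ)) :
    (j + 1 : ℝ) ≤ 5 * ε⁻¹ * (1 + Real.logb 2 (1 + Φ)) := by
  set L := Real.logb 2 (1 + Φ)
  have hL : 0 ≤ L := Real.logb_nonneg one_lt_two (by linarith)
  have hdecay : (1 - ε / 4) ^ j ≤ Real.exp (-(j * ε / 4)) := by
    rw [show -(j * ε / 4) = j * -(ε / 4) by ring, Real.exp_nat_mul]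
    exact pow_le_pow_left₀ (by linarith) (by linarith [Real.add_one_le_exp (-(ε / 4))]) j
  have hlog : j * ε / 4 ≤ Real.log (2 * (1 + Φ)) := by
    rw [Real.le_log_iff_exp_le (by positivity)]
    have := h.trans (mul_le_mul_of_nonneg_right hdecay (by linarith))
    rw [Real.exp_neg] at this
    have := (le_inv_mul_iff₀ (Real.exp_pos _)).mp this
    linarith
  -- `log (2 (1 + Φ)) = log 2 · (1 + L)` and `log 2 < 1`
  have hlog2 : Real.log (2 * (1 + Φ)) ≤ 1 + L := by
    have hlog2pos := Real.log_pos one_lt_two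
    have : Real.log (1 + Φ) = Real.log 2 * L := by
      simp only [L, Real.logb]
      field_simp
    rw [Real.log_mul two_ne_zero (by linarith), this]
    nlinarith [Real.log_two_lt_d9]
  have hεinv : 1 ≤ ε⁻¹ := one_le_inv_iff₀.mpr ⟨hε, hε1⟩
  have : (j : ℝ) ≤ 4 * ε⁻¹ * (1 + L) := by
    rw [mul_comm 4, mul_assoc, le_inv_mul_iff₀ hε]
    linarith
  nlinarith

theorem IsFirstImprovingWalk.length_le {ε : ℝ} (hε : 0 < ε) (hε1 : ε ≤ 1)
    (hp : Function.Injective p) {q : X} {v : ℕ → Fin n} {k : ℕ} (hv : IsFirstImprovingWalk p ε q v k) :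
    (k : ℝ) ≤ 5 * ε⁻¹ * (1 + Real.logb 2 (1 + spread p)) := by
  rcases k with _ | j
  · have := Real.logb_nonneg one_lt_two (le_add_of_nonneg_right (spread_nonneg (p := p)))
    simp only [CharP.cast_eq_zero]
    positivity
  · have hj : v j ≠ v (j + 1) := fun h => (hv j j.lt_succ_self).1.1.ne (congrArg Fin.val h)
    push_cast
    exact add_one_le_of_one_le_pow_mul hε hε1 spread_nonneg <|
      one_le_pow_mul_spread (by linarith) (by linarith) hp q v j hj
        fun m hm => (hv m hm).2.1

end Walk

section NearestNeighbor

variable {X : Type*} [MetricSpace X] {n : ℕ} {p : Fin n → X} {ε : ℝ} {q : X}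

theorem IsGreedyPerm.exists_dist_lt_forall_le_gpRadius (hp : IsGreedyPerm p) (t : Fin n) {τ : ℝ}
    (hτ : 0 < τ) : ∃ b : Fin n, dist (p t) (p b) < τ ∧
      ∀ c : Fin n, 0 < (c : ℕ) → c ≤ b → τ ≤ gpRadius p c := by
  by_cases h : ∃ c : Fin n, 0 < (c : ℕ) ∧ gpRadius p c < τ
  -- the prefix before the first radius below `τ` is a `τ`-net of all the points
  · obtain ⟨c₀, ⟨hc₀, hrc₀⟩, hmin⟩ := exists_minimal_of_wellFoundedLT _ h
    have hbig : ∀ c : Fin n, 0 < (c : ℕ) → c < c₀ → τ ≤ gpRadius p c := fun c hc hlt =>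
      not_lt.mp fun hr => (hmin ⟨hc, hr⟩ hlt.le).not_gt hlt
    by_cases ht : t < c₀
    · exact ⟨t, by simpa using hτ, fun c hc hct => hbig c hc (hct.trans_lt ht)⟩
    · obtain ⟨_, ⟨b, hb, rfl⟩, hdist⟩ := (infDist_lt_iff (image_prefix_nonempty p hc₀)).mp
        ((hp.2 c₀ t (not_lt.mp ht)).trans_lt hrc₀)
      exact ⟨b, hdist, fun c hc hcb => hbig c hc (hcb.trans_lt hb)⟩
  · push Not at h
    exact ⟨t, by simpa using hτ, fun c hc _ => h c hc⟩

theorem gpEdge_of_dist_le {u a : Fin n} (hε : 0 < ε) (hua : (u : ℕ) < a)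
    (hqa : dist q (p a) ≤ dist q (p u)) (hr : ε / 4 * dist q (p u) ≤ gpRadius p a) :
    gpEdge p ε u a := by
  refine ⟨hua, (le_div_iff₀ hε).mpr ?_⟩
  have := dist_triangle_left (p u) (p a) q
  nlinarith

def NoImprovingUpTo (p : Fin n → X) (ε : ℝ) (q : X) (u : Fin n) : Prop :=
  ∀ a : Fin n, a ≤ u → (1 - ε / 4) * dist q (p u) < dist q (p a)

theorem NoImprovingUpTo.exists_gpEdge (hp : IsGreedyPerm p) (hε : 0 < ε) (hε1 : ε ≤ 1) {u : Fin n}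
    (hu : NoImprovingUpTo p ε q u)
    (hfar : (1 + ε) * infDist q (Set.range p) < dist q (p u)) :
    ∃ b : Fin n, gpEdge p ε u b ∧ dist q (p b) ≤ (1 - ε / 4) * dist q (p u) ∧
      ∀ c : Fin n, 0 < (c : ℕ) → c ≤ b → ε / 4 * dist q (p u) ≤ gpRadius p c := by
  set δ := dist q (p u)
  have hD : 0 ≤ infDist q (Set.range p) := infDist_nonneg
  have hδ : 0 < δ := by nlinarith
  obtain ⟨_, ⟨t, rfl⟩, ht⟩ :=
    (Set.finite_range p).isCompact.exists_infDist_eq_dist ⟨p u, u, rfl⟩ q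
  obtain ⟨b, hbt, hb⟩ := hp.exists_dist_lt_forall_le_gpRadius t (by positivity : 0 < ε / 4 * δ)
  have hDδ : infDist q (Set.range p) < (1 - ε / 2) * δ := by
    nlinarith [mul_lt_mul_of_pos_left hfar (by linarith : 0 < 1 - ε / 2),
      mul_nonneg (mul_nonneg hε.le (sub_nonneg.2 hε1)) hD]
  have hqb : dist q (p b) ≤ (1 - ε / 4) * δ := by
    linarith [dist_triangle q (p t) (p b)]
  have hub : u < b := not_le.mp fun hbu => (hu b hbu).not_ge hqb
  exact ⟨b, gpEdge_of_dist_le hε hub (by nlinarith) (hb b (by omega) le_rfl), hqb, hb⟩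

variable {v : ℕ → Fin n} {k : ℕ}

theorem IsFirstImprovingWalk.dist_succ_le (hε : 0 < ε) (hv : IsFirstImprovingWalk p ε q v k)
    {m : ℕ} (hm : m < k) : dist q (p (v (m + 1))) ≤ dist q (p (v m)) := by
  have := (hv m hm).2.1
  nlinarith [dist_nonneg (x := q) (y := p (v m))]

theorem IsFirstImprovingWalk.dist_le_of_le (hε : 0 < ε) (hv : IsFirstImprovingWalk p ε q v k)
    {m : ℕ} (hm : m ≤ k) : dist q (p (v k)) ≤ dist q (p (v m)) := by
  have := le_geom (u := fun i => dist q (p (v (m + i)))) zero_le_one (k - m) fun i hi => by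
    simpa [← add_assoc] using hv.dist_succ_le hε (m := m + i) (by omega)
  simpa [Nat.add_sub_cancel' hm] using this

theorem IsFirstImprovingWalk.noImprovingUpTo_succ (hp : IsGreedyPerm p) (hε : 0 < ε) (hε1 : ε ≤ 1)
    (hv : IsFirstImprovingWalk p ε q v k) {m : ℕ} (hm : m < k)
    (hfar : (1 + ε) * infDist q (Set.range p) < dist q (p (v (m + 1))))
    (hinv : NoImprovingUpTo p ε q (v m)) : NoImprovingUpTo p ε q (v (m + 1)) := by
  obtain ⟨-, -, hfirst⟩ := hv m hm
  have hstep := hv.dist_succ_le hε hm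
  have hδ' : 0 < dist q (p (v (m + 1))) := by nlinarith [infDist_nonneg (x := q) (s := Set.range p)]
  obtain ⟨b, hb, hqb, hrb⟩ := hinv.exists_gpEdge hp hε hε1 (hfar.trans_le hstep)
  have hnext : v (m + 1) ≤ b := hfirst b hb hqb
  intro a ha
  by_contra! hqa
  have hqa' : dist q (p a) ≤ (1 - ε / 4) * dist q (p (v m)) :=
    hqa.trans (mul_le_mul_of_nonneg_left hstep (by linarith))
  rcases le_or_gt a (v m) with hav | hva
  · exact (hinv a hav).not_ge hqa'
  rcases ha.eq_or_lt with rfl | hlt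
  · nlinarith
  -- a skipped improving point would be an out-neighbour of `v m` preceding `v (m + 1)`
  · have ha_edge := gpEdge_of_dist_le hε hva (by nlinarith) (hrb a (by omega) (hlt.le.trans hnext))
    exact (hfirst a ha_edge hqa').not_gt hlt

theorem IsFirstImprovingWalk.dist_le_one_add_mul_infDist (hp : IsGreedyPerm p) (hε : 0 < ε)
    (hε1 : ε ≤ 1) (hv : IsFirstImprovingWalk p ε q v k) (hv0 : (v 0 : ℕ) = 0)
    (hmax : ∀ i : Fin n, gpEdge p ε (v k) i →
      ¬dist q (p i) ≤ (1 - ε / 4) * dist q (p (v k))) :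
    dist q (p (v k)) ≤ (1 + ε) * infDist q (Set.range p) := by
  by_contra! hfar
  have hinv : ∀ m ≤ k, NoImprovingUpTo p ε q (v m) := by
    intro m hm
    induction m with
    | zero =>
      intro a ha
      obtain rfl : a = v 0 := Fin.ext (by have : (a : ℕ) ≤ v 0 := ha; omega)
      have hδ₀ : 0 < dist q (p (v 0)) := by
        nlinarith [hv.dist_le_of_le hε (Nat.zero_le k), infDist_nonneg (x := q) (s := Set.range p)]
      nlinarith
    | succ m ih =>
      exact hv.noImprovingUpTo_succ hp hε hε1 hm (hfar.trans_le (hv.dist_le_of_le hε hm))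
        (ih (by omega))
  obtain ⟨b, hb, hqb, -⟩ := (hinv k le_rfl).exists_gpEdge hp hε hε1 hfar
  exact hmax b hb hqb

end NearestNeighbor

theorem stmt_10_general (d : ℕ) :
    ∃ C : ℝ, 0 < C ∧
      ∀ (n : ℕ), 2 ≤ n →
      ∀ p : Fin n → EuclideanSpace ℝ (Fin d), IsGreedyPerm p →
      ∀ Φ : ℝ,
        Φ = Metric.diam (Set.range p) /
              sInf {r : ℝ | ∃ a b : Fin n, a ≠ b ∧ r = dist (p a) (p b)} →
      ∀ ε : ℝ, ε ∈ Set.Ioc (0 : ℝ) (1 / 2) →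
      -- (a) the graph has at most `C n / ε^d` edges
      ((Nat.card {e : Fin n × Fin n | gpEdge p ε e.1 e.2} : ℝ) ≤ C * n / ε ^ d) ∧
      -- (b) greedy walks are short and, if maximal, end at a (1+ε)-ANN
      (∀ q : EuclideanSpace ℝ (Fin d), ∀ v : ℕ → Fin n, ∀ k : ℕ,
        (v 0 : ℕ) = 0 →
        (∀ m < k,
          gpEdge p ε (v m) (v (m + 1)) ∧
          dist q (p (v (m + 1))) ≤ (1 - ε / 4) * dist q (p (v m)) ∧
          (∀ i : Fin n, gpEdge p ε (v m) i →
            dist q (p i) ≤ (1 - ε / 4) * dist q (p (v m)) →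
            (v (m + 1) : ℕ) ≤ (i : ℕ))) →
        (k : ℝ) ≤ C * ε⁻¹ * (1 + Real.logb 2 (1 + Φ)) ∧
        ((∀ i : Fin n, gpEdge p ε (v k) i →
            ¬(dist q (p i) ≤ (1 - ε / 4) * dist q (p (v k)))) →
          dist q (p (v k)) ≤ (1 + ε) * Metric.infDist q (Set.range p))) := by
  refine ⟨17 ^ d + 5, by positivity, fun n _ p hp Φ hΦ ε ⟨hε, hε2⟩ => ?_⟩
  obtain rfl : Φ = spread p := hΦ
  have hε1 : ε ≤ 1 := by linarith
  refine ⟨?_, fun q v k hv0 hv =>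
    ⟨?_, IsFirstImprovingWalk.dist_le_one_add_mul_infDist hp hε hε1 hv hv0⟩⟩
  · calc _ ≤ n * (17 / ε) ^ d := by
          simpa only [finrank_euclideanSpace_fin] using hp.card_gpEdge_le hε hε1
      _ = 17 ^ d * n / ε ^ d := by rw [div_pow]; ring
      _ ≤ (17 ^ d + 5) * n / ε ^ d := by gcongr; linarith
  · have hlog := Real.logb_nonneg one_lt_two (le_add_of_nonneg_right (spread_nonneg (p := p)))
    calc (k : ℝ) ≤ 5 * ε⁻¹ * (1 + Real.logb 2 (1 + spread p)) :=
          IsFirstImprovingWalk.length_le hε hε1 hp.1 hv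
      _ ≤ (17 ^ d + 5) * ε⁻¹ * (1 + Real.logb 2 (1 + spread p)) := by
          gcongr
          linarith [pow_nonneg (show (0 : ℝ) ≤ 17 by norm_num) d]

/-- **ANN via greedy walks on the greedy-permutation graph.** For every `d ≥ 1`
there is `C = C(d) > 0` such that for every exact greedy permutation of `n ≥ 2`
points of `ℝ^d` with spread `Φ` and every `ε ∈ (0,1/2]`, the greedy-permutation
graph `E` satisfies: (a) `|E| ≤ C n ε⁻ᵈ`; and (b) for every query `q`, every
first-improving greedy walk `v₀ = p₁, v₁, v₂, …` (each step moves to the improving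
out-neighbor of smallest index, where improving means the distance to `q` drops by
a factor `1 - ε/4`) has at most `C ε⁻¹ (1 + log₂(1 + Φ))` steps, and if it is
maximal (no improving out-neighbor at the final vertex) its final vertex is a
`(1+ε)`-approximate nearest neighbor of `q`. -/
theorem stmt_10 (d : ℕ) (hd : 1 ≤ d) :
    ∃ C : ℝ, 0 < C ∧
      ∀ (n : ℕ), 2 ≤ n →
      ∀ p : Fin n → EuclideanSpace ℝ (Fin d), IsGreedyPerm p →
      ∀ Φ : ℝ,
        Φ = Metric.diam (Set.range p) /
              sInf {r : ℝ | ∃ a b : Fin n, a ≠ b ∧ r = dist (p a) (p b)} →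
      ∀ ε : ℝ, ε ∈ Set.Ioc (0 : ℝ) (1 / 2) →
      -- (a) the graph has at most `C n / ε^d` edges
      ((Nat.card {e : Fin n × Fin n | gpEdge p ε e.1 e.2} : ℝ) ≤ C * n / ε ^ d) ∧
      -- (b) greedy walks are short and, if maximal, end at a (1+ε)-ANN
      (∀ q : EuclideanSpace ℝ (Fin d), ∀ v : ℕ → Fin n, ∀ k : ℕ,
        (v 0 : ℕ) = 0 →
        (∀ m < k,
          gpEdge p ε (v m) (v (m + 1)) ∧
          dist q (p (v (m + 1))) ≤ (1 - ε / 4) * dist q (p (v m)) ∧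
          (∀ i : Fin n, gpEdge p ε (v m) i →
            dist q (p i) ≤ (1 - ε / 4) * dist q (p (v m)) →
            (v (m + 1) : ℕ) ≤ (i : ℕ))) →
        (k : ℝ) ≤ C * ε⁻¹ * (1 + Real.logb 2 (1 + Φ)) ∧
        ((∀ i : Fin n, gpEdge p ε (v k) i →
            ¬(dist q (p i) ≤ (1 - ε / 4) * dist q (p (v k)))) →
          dist q (p (v k)) ≤ (1 + ε) * Metric.infDist q (Set.range p))) :=
  stmt_10_general d
end

section
/- Let (X, d) be a metric space, let P ⊆ X be finite and nonempty, let Q ⊆ P be nonempty, let r ≥ 0, and let ε ∈ (0,1]. Suppose that every point p ∈ P satisfies d(p, Q) ≤ r (i.e., Q covers P at radius r). Let q ∈ X and let a ∈ Q be a point with d(q, a) ≤ (1 + ε/4)·d(q, Q) and r < (ε/8)·d(q, a). Then d(q, a) ≤ (1 + ε)·d(q, P). -/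
/-! If `Q` is an `r`-covering of `P`, then `d(q, Q) ≤ d(q, P) + r`, so `a` is a
`(1 + ε/4)`-approximate nearest neighbour of `q` in `P` up to an additive error
`(1 + ε/4) r`. The hypothesis `r < (ε/8) d(q, a)` turns this additive error into a
multiplicative one that, for `ε ≤ 1`, still fits inside the factor `1 + ε`. -/

open Metric

theorem infDist_le_infDist_add_of_forall_infDist_le {X : Type*} [PseudoMetricSpace X]
    {P Q : Set X} {r : ℝ} (hP : P.Nonempty) (hcover : ∀ p ∈ P, infDist p Q ≤ r) (q : X) :
    infDist q Q ≤ infDist q P + r := by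
  rw [← sub_le_iff_le_add, le_infDist hP]
  intro p hp
  linarith [hcover p hp, infDist_le_infDist_add_dist (x := q) (y := p) (s := Q)]

theorem le_one_add_mul_of_le_one_add_quarter_mul {ε d dQ dP r : ℝ} (hε : ε ∈ Set.Ioc (0 : ℝ) 1)
    (hd : 0 ≤ d) (hdP : 0 ≤ dP) (hdQ : dQ ≤ dP + r) (hann : d ≤ (1 + ε / 4) * dQ)
    (hfar : r < ε / 8 * d) : d ≤ (1 + ε) * dP := by
  obtain ⟨hε0, hε1⟩ := hε
  -- `5/32` bounds `(1 + ε/4) · ε/8` for `ε ≤ 1`.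
  have hsmall : d * (1 - 5 * ε / 32) ≤ (1 + ε / 4) * dP :=
    calc d * (1 - 5 * ε / 32) ≤ (1 + ε / 4) * (dP + r) - 5 * ε / 32 * d := by nlinarith
      _ ≤ (1 + ε / 4) * dP := by
        nlinarith [mul_le_mul_of_nonneg_right hε1 (mul_nonneg hε0.le hd)]
  nlinarith [mul_nonneg hε0.le hd]

theorem stmt_11_general {X : Type*} [MetricSpace X] (P Q : Set X)
    (hPne : P.Nonempty) (r : ℝ) (ε : ℝ) (hε : ε ∈ Set.Ioc (0 : ℝ) 1)
    (hcover : ∀ x ∈ P, Metric.infDist x Q ≤ r)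
    (q a : X)
    (hann : dist q a ≤ (1 + ε / 4) * Metric.infDist q Q)
    (hfar : r < ε / 8 * dist q a) :
    dist q a ≤ (1 + ε) * Metric.infDist q P :=
  le_one_add_mul_of_le_one_add_quarter_mul hε dist_nonneg infDist_nonneg
    (infDist_le_infDist_add_of_forall_infDist_le hPne hcover q) hann hfar

/-- **Early-stopping criterion.** In a metric space, let `P` be finite nonempty,
`Q ⊆ P` nonempty, `r ≥ 0`, `ε ∈ (0,1]`, and suppose every point of `P` is within
distance `r` of `Q`. If `a ∈ Q` satisfies `d(q,a) ≤ (1 + ε/4) d(q,Q)` and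
`r < (ε/8) d(q,a)`, then `d(q,a) ≤ (1+ε) d(q,P)`. -/
theorem stmt_11 {X : Type*} [MetricSpace X] (P Q : Set X) (hPfin : P.Finite)
    (hPne : P.Nonempty) (hQP : Q ⊆ P) (hQne : Q.Nonempty)
    (r : ℝ) (hr : 0 ≤ r) (ε : ℝ) (hε : ε ∈ Set.Ioc (0 : ℝ) 1)
    (hcover : ∀ x ∈ P, Metric.infDist x Q ≤ r)
    (q a : X) (ha : a ∈ Q)
    (hann : dist q a ≤ (1 + ε / 4) * Metric.infDist q Q)
    (hfar : r < ε / 8 * dist q a) :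
    dist q a ≤ (1 + ε) * Metric.infDist q P :=
  stmt_11_general P Q hPne r ε hε hcover q a hann hfar
end

section
/- For every integer d ≥ 1 there is a constant C = C(d) > 0 such that the following holds. Let ε ∈ (0,1), let P = {p₁, …, p_n} ⊆ ℝ^d (with the Euclidean metric) be a set of n ≥ 2 points with spread Φ, listed in an exact greedy permutation order with prefixes P_i and radii r_{i−1} = dist(p_i, P_{i−1}), and let E = {(p_j, p_i) : j < i and dist(p_j, p_i) ≤ 8·r_{i−1}/ε}. Then: (a) for every p ∈ P and every L > 0, the number of edges (p, p_i) ∈ E with dist(p, p_i) ∈ [L/2, L] is at most (1 + 32/ε)^d; and (b) consequently, every vertex of (P, E) has out-degree at most C·ε^{−d}·log₂(2Φ). -/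
open Metric MeasureTheory Finset Module
open scoped ENNReal


lemma my_packing {d : ℕ} (c : EuclideanSpace ℝ (Fin d)) {R r : ℝ}
    (hR : 0 < R) (hr : 0 < r) (t : Finset (EuclideanSpace ℝ (Fin d)))
    (hball : ∀ x ∈ t, dist x c ≤ R)
    (hsep : ∀ x ∈ t, ∀ y ∈ t, x ≠ y → r ≤ dist x y) :
    (t.card : ℝ) ≤ (2 * R / r + 1) ^ d := by
  have hfr : finrank ℝ (EuclideanSpace ℝ (Fin d)) = d := finrank_euclideanSpace_fin
  set μ : Measure (EuclideanSpace ℝ (Fin d)) := volume with hμ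
  have hsubset : (⋃ x ∈ t, ball x (r/2)) ⊆ ball c (R + r/2) := by
    intro z hz
    simp only [Set.mem_iUnion] at hz
    obtain ⟨x, hx, hzx⟩ := hz
    rw [mem_ball] at hzx ⊢
    calc dist z c ≤ dist z x + dist x c := dist_triangle _ _ _
      _ < R + r/2 := by have := hball x hx; linarith
  have hmeas : μ (⋃ x ∈ t, ball x (r/2)) = ∑ x ∈ t, μ (ball x (r/2)) := by
    apply measure_biUnion_finset
    · intro x hx y hy hxy
      exact ball_disjoint_ball (by linarith [hsep x hx y hy hxy])
    · intro x _; exact measurableSet_ball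
  have hballval : ∀ x : EuclideanSpace ℝ (Fin d), μ (ball x (r/2)) =
      ENNReal.ofReal ((r/2) ^ d) * μ (ball (0:EuclideanSpace ℝ (Fin d)) 1) := by
    intro x
    rw [Measure.addHaar_ball_of_pos μ x (by linarith), hfr]
  have hbig : μ (ball c (R + r/2)) =
      ENNReal.ofReal ((R + r/2) ^ d) * μ (ball (0:EuclideanSpace ℝ (Fin d)) 1) := by
    rw [Measure.addHaar_ball_of_pos μ c (by linarith), hfr]
  have hBpos : 0 < μ (ball (0:EuclideanSpace ℝ (Fin d)) 1) := measure_ball_pos μ 0 one_pos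
  have hBfin : μ (ball (0:EuclideanSpace ℝ (Fin d)) 1) ≠ ⊤ := measure_ball_lt_top.ne
  have h1 : (t.card : ℝ≥0∞) * ENNReal.ofReal ((r/2) ^ d)
        * μ (ball (0:EuclideanSpace ℝ (Fin d)) 1)
      ≤ ENNReal.ofReal ((R + r/2) ^ d) * μ (ball (0:EuclideanSpace ℝ (Fin d)) 1) := by
    calc (t.card : ℝ≥0∞) * ENNReal.ofReal ((r/2) ^ d)
          * μ (ball (0:EuclideanSpace ℝ (Fin d)) 1)
        = ∑ x ∈ t, μ (ball x (r/2)) := by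
          rw [Finset.sum_congr rfl (fun x _ => hballval x), Finset.sum_const, nsmul_eq_mul,
            mul_assoc]
      _ = μ (⋃ x ∈ t, ball x (r/2)) := hmeas.symm
      _ ≤ μ (ball c (R + r/2)) := measure_mono hsubset
      _ = _ := hbig
  have key : (t.card : ℝ≥0∞) * ENNReal.ofReal ((r/2) ^ d)
      ≤ ENNReal.ofReal ((R + r/2) ^ d) :=
    (ENNReal.mul_le_mul_iff_left hBpos.ne' hBfin).mp h1
  have key2 : (t.card : ℝ) * (r/2) ^ d ≤ (R + r/2) ^ d := by
    have hpow : (0:ℝ) ≤ (r/2) ^ d := by positivity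
    rw [← ENNReal.ofReal_natCast, ← ENNReal.ofReal_mul (by positivity)] at key
    exact (ENNReal.ofReal_le_ofReal_iff (by positivity)).mp key
  have hhalf : (0:ℝ) < (r/2) ^ d := by positivity
  rw [← le_div_iff₀ hhalf] at key2
  calc (t.card : ℝ) ≤ (R + r/2) ^ d / (r/2) ^ d := key2
    _ = ((R + r/2) / (r/2)) ^ d := (div_pow _ _ _).symm
    _ = (2 * R / r + 1) ^ d := by
        congr 1
        field_simp
lemma gpRadius_le_dist_s12 {X : Type*} [MetricSpace X] {n : ℕ} (p : Fin n → X)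
    {j i : Fin n} (h : (j : ℕ) < (i : ℕ)) : gpRadius p i ≤ dist (p j) (p i) := by
  rw [dist_comm]
  exact Metric.infDist_le_dist_of_mem ⟨j, h, rfl⟩

lemma my_partA {d n : ℕ} {ε : ℝ} (hε : ε ∈ Set.Ioo (0:ℝ) 1)
    (p : Fin n → EuclideanSpace ℝ (Fin d)) (hp : IsGreedyPerm p) (j : Fin n)
    {L : ℝ} (hL : 0 < L) :
    (Nat.card {i : Fin n |
        gpEdge p ε j i ∧ dist (p j) (p i) ∈ Set.Icc (L / 2) L} : ℝ)
      ≤ (1 + 32 / ε) ^ d := by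
  classical
  obtain ⟨hε0, hε1⟩ := hε
  set S : Set (Fin n) := {i : Fin n |
    gpEdge p ε j i ∧ dist (p j) (p i) ∈ Set.Icc (L / 2) L} with hS
  have hfin : S.Finite := Set.toFinite S
  set F : Finset (Fin n) := hfin.toFinset with hF
  have hcard : Nat.card S = F.card := by
    rw [Nat.card_coe_set_eq, Set.ncard_eq_toFinset_card _ hfin]
  set t : Finset (EuclideanSpace ℝ (Fin d)) := F.image p with ht
  have htcard : t.card = F.card := Finset.card_image_of_injective _ hp.1
  have hmemS : ∀ i ∈ F, gpEdge p ε j i ∧ dist (p j) (p i) ∈ Set.Icc (L / 2) L := by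
    intro i hi
    exact hfin.mem_toFinset.mp hi
  have hrad : ∀ i ∈ F, ε * L / 16 ≤ gpRadius p i := by
    intro i hi
    obtain ⟨⟨hji, hdi⟩, hlo, hhi⟩ := hmemS i hi
    have h1 : ε * dist (p j) (p i) ≤ 8 * gpRadius p i := by
      rw [le_div_iff₀ hε0] at hdi
      rw [mul_comm]; exact hdi
    have h2 : ε * (L / 2) ≤ ε * dist (p j) (p i) :=
      mul_le_mul_of_nonneg_left hlo hε0.le
    linarith
  have hsep : ∀ x ∈ t, ∀ y ∈ t, x ≠ y → ε * L / 16 ≤ dist x y := by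
    have key : ∀ i ∈ F, ∀ i' ∈ F, (i : ℕ) < (i' : ℕ) →
        ε * L / 16 ≤ dist (p i) (p i') := by
      intro i hi i' hi' hlt
      exact le_trans (hrad i' hi') (gpRadius_le_dist_s12 p hlt)
    intro x hx y hy hxy
    obtain ⟨i, hi, rfl⟩ := Finset.mem_image.mp hx
    obtain ⟨i', hi', rfl⟩ := Finset.mem_image.mp hy
    have hne : (i : ℕ) ≠ (i' : ℕ) := by
      intro h; exact hxy (congrArg p (Fin.ext h))
    rcases hne.lt_or_gt with h | h
    · exact key i hi i' hi' h
    · rw [dist_comm]; exact key i' hi' i hi h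
  have hball : ∀ x ∈ t, dist x (p j) ≤ L := by
    intro x hx
    obtain ⟨i, hi, rfl⟩ := Finset.mem_image.mp hx
    rw [dist_comm]
    exact (hmemS i hi).2.2
  have hr : (0:ℝ) < ε * L / 16 := by positivity
  have := my_packing (p j) hL hr t hball hsep
  rw [hcard, ← htcard]
  refine this.trans (le_of_eq ?_)
  congr 1
  rw [add_comm]
  congr 1
  field_simp
  ring

/-- **Admissible edges and out-degrees of the greedy-permutation graph.** For every
`d ≥ 1` there is `C = C(d) > 0` such that for any `ε ∈ (0,1)` and any exact greedy
permutation of `n ≥ 2` points of `ℝ^d` with spread `Φ`: (a) for every vertex `p_j`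
and `L > 0`, the number of `L`-admissible edges `(p_j, p_i)` (those with
`dist (p_j) (p_i) ∈ [L/2, L]`) is at most `(1 + 32/ε)^d`; and (b) every vertex has
out-degree at most `C ε⁻ᵈ log₂(2Φ)`. -/
theorem stmt_12 (d : ℕ) (hd : 1 ≤ d) :
    ∃ C : ℝ, 0 < C ∧
      ∀ ε : ℝ, ε ∈ Set.Ioo (0 : ℝ) 1 →
      ∀ (n : ℕ), 2 ≤ n →
      ∀ p : Fin n → EuclideanSpace ℝ (Fin d), IsGreedyPerm p →
      ∀ Φ : ℝ,
        Φ = Metric.diam (Set.range p) /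
              sInf {r : ℝ | ∃ a b : Fin n, a ≠ b ∧ r = dist (p a) (p b)} →
      (∀ j : Fin n, ∀ L : ℝ, 0 < L →
        (Nat.card {i : Fin n |
            gpEdge p ε j i ∧ dist (p j) (p i) ∈ Set.Icc (L / 2) L} : ℝ)
          ≤ (1 + 32 / ε) ^ d) ∧
      (∀ j : Fin n,
        (Nat.card {i : Fin n | gpEdge p ε j i} : ℝ) ≤
          C / ε ^ d * Real.logb 2 (2 * Φ)) := by
  classical
  refine ⟨33 ^ d, by positivity, ?_⟩
  intro ε hε n hn p hp Φ hΦ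
  obtain ⟨hε0, hε1⟩ := hε
  refine ⟨fun j L hL => my_partA ⟨hε0, hε1⟩ p hp j hL, ?_⟩
  intro j
  set D := Metric.diam (Set.range p) with hDdef
  set cpset := {r : ℝ | ∃ a b : Fin n, a ≠ b ∧ r = dist (p a) (p b)} with hcpset
  set cp := sInf cpset with hcpdef
  set i0 : Fin n := ⟨0, by omega⟩
  set i1 : Fin n := ⟨1, by omega⟩
  have h01 : i0 ≠ i1 := by simp [i0, i1, Fin.ext_iff]
  have hfin : cpset.Finite := by
    apply Set.Finite.subset (Set.finite_range
      (fun q : Fin n × Fin n => dist (p q.1) (p q.2)))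
    rintro r ⟨a, b, hab, rfl⟩
    exact ⟨(a, b), rfl⟩
  have hne : cpset.Nonempty := ⟨dist (p i0) (p i1), i0, i1, h01, rfl⟩
  have hbdd : BddBelow cpset := ⟨0, by rintro r ⟨a, b, hab, rfl⟩; exact dist_nonneg⟩
  have hcp_pos : 0 < cp := by
    obtain ⟨a, b, hab, hr⟩ := hne.csInf_mem hfin
    rw [hcpdef, hr]
    exact dist_pos.mpr fun h => hab (hp.1 h)
  have hcp_le : ∀ a b : Fin n, a ≠ b → cp ≤ dist (p a) (p b) :=
    fun a b hab => csInf_le hbdd ⟨a, b, hab, rfl⟩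
  have hbdP : Bornology.IsBounded (Set.range p) := (Set.finite_range p).isBounded
  have hD_ge : ∀ a b : Fin n, dist (p a) (p b) ≤ D :=
    fun a b => Metric.dist_le_diam_of_mem hbdP ⟨a, rfl⟩ ⟨b, rfl⟩
  have hD_pos : 0 < D :=
    lt_of_lt_of_le (dist_pos.mpr fun h => h01 (hp.1 h)) (hD_ge i0 i1)
  have hcpD : cp ≤ D := (hcp_le i0 i1 h01).trans (hD_ge i0 i1)
  have hΦ1 : 1 ≤ Φ := by
    rw [hΦ, le_div_iff₀ hcp_pos, one_mul]; exact hcpD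
  set K := Nat.floor (Real.logb 2 Φ) with hK
  set S : Set (Fin n) := {i : Fin n | gpEdge p ε j i} with hS
  set Sk : ℕ → Set (Fin n) := fun k => {i : Fin n |
      gpEdge p ε j i ∧ dist (p j) (p i) ∈ Set.Icc (D / 2 ^ k / 2) (D / 2 ^ k)} with hSk
  have hSfin : S.Finite := Set.toFinite S
  have hSkfin : ∀ k, (Sk k).Finite := fun k => Set.toFinite _
  set FS := hSfin.toFinset with hFS
  have hcover : FS ⊆ (Finset.range (K + 1)).biUnion fun k => (hSkfin k).toFinset := by
    intro i hi
    have hiS : gpEdge p ε j i := (hSfin.mem_toFinset).mp hi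
    obtain ⟨hji, hdi⟩ := hiS
    have hij : j ≠ i := fun h => by simp [h] at hji
    set Di := dist (p j) (p i) with hDi
    have hDi_pos : 0 < Di := dist_pos.mpr fun h => hij (hp.1 h)
    have hDiD : Di ≤ D := hD_ge j i
    have hcpDi : cp ≤ Di := hcp_le j i hij
    set q := D / Di with hq
    have hq1 : 1 ≤ q := (one_le_div hDi_pos).mpr hDiD
    have hqΦ : q ≤ Φ := by
      rw [hΦ, hq, div_le_div_iff₀ hDi_pos hcp_pos]
      nlinarith
    set k := Nat.floor (Real.logb 2 q) with hk
    have hlogq0 : 0 ≤ Real.logb 2 q := Real.logb_nonneg one_lt_two hq1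
    have hkK : k ≤ K := Nat.floor_le_floor
      (Real.logb_le_logb_of_le one_lt_two (by linarith) hqΦ)
    have h2k : (2:ℝ) ^ k ≤ q := by
      have := Real.rpow_le_rpow_of_exponent_le (one_le_two)
        (Nat.floor_le hlogq0 : (k:ℝ) ≤ Real.logb 2 q)
      rwa [Real.rpow_natCast, Real.rpow_logb two_pos (by norm_num) (by positivity)] at this
    have h2k1 : q < (2:ℝ) ^ (k + 1) := by
      have := Real.rpow_lt_rpow_of_exponent_lt (one_lt_two)
        (Nat.lt_floor_add_one (Real.logb 2 q))
      rw [Real.rpow_logb two_pos (by norm_num) (by positivity)] at this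
      calc q < (2:ℝ) ^ ((k:ℝ) + 1) := by exact_mod_cast this
        _ = (2:ℝ) ^ (k + 1) := by
            rw [← Real.rpow_natCast (2:ℝ) (k+1)]; norm_num
    rw [Finset.mem_biUnion]
    refine ⟨k, Finset.mem_range.mpr (by omega), ?_⟩
    rw [(hSkfin k).mem_toFinset]
    have hpow : (0:ℝ) < (2:ℝ) ^ k := by positivity
    refine ⟨⟨hji, hdi⟩, ?_, ?_⟩
    · -- D / 2^k / 2 ≤ Di
      have h3 : D < 2 ^ (k + 1) * Di := by
        rwa [hq, div_lt_iff₀ hDi_pos] at h2k1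
      rw [div_div, ← pow_succ]
      rw [div_le_iff₀ (by positivity : (0:ℝ) < 2 ^ (k+1))]
      linarith [mul_comm ((2:ℝ) ^ (k+1)) Di]
    · -- Di ≤ D / 2^k
      have h3 : 2 ^ k * Di ≤ D := by
        rwa [hq, le_div_iff₀ hDi_pos] at h2k
      rw [le_div_iff₀ hpow]
      nlinarith
  have hcard1 : (Nat.card S : ℝ) ≤
      ∑ k ∈ Finset.range (K + 1), (Nat.card (Sk k) : ℝ) := by
    have h1 : Nat.card S = FS.card := by
      rw [Nat.card_coe_set_eq, Set.ncard_eq_toFinset_card _ hSfin]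
    have h2 : ∀ k, Nat.card (Sk k) = ((hSkfin k).toFinset).card := fun k => by
      rw [Nat.card_coe_set_eq, Set.ncard_eq_toFinset_card _ (hSkfin k)]
    rw [h1]
    push_cast [h2]
    calc (FS.card : ℝ)
        ≤ (((Finset.range (K + 1)).biUnion fun k => (hSkfin k).toFinset).card : ℝ) := by
          exact_mod_cast Finset.card_le_card hcover
      _ ≤ ∑ k ∈ Finset.range (K + 1), (((hSkfin k).toFinset).card : ℝ) := by
          exact_mod_cast Finset.card_biUnion_le
  have hA : ∀ k : ℕ, (Nat.card (Sk k) : ℝ) ≤ (1 + 32 / ε) ^ d := by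
    intro k
    exact my_partA ⟨hε0, hε1⟩ p hp j (div_pos hD_pos (by positivity))
  have hAle : (1 + 32 / ε) ^ d ≤ 33 ^ d / ε ^ d := by
    rw [← div_pow]
    apply pow_le_pow_left₀ (by positivity)
    have h1ε : 1 ≤ 1 / ε := by rw [le_div_iff₀ hε0]; linarith
    rw [show (33:ℝ) / ε = 1 / ε + 32 / ε by ring]
    linarith
  have hKlog : (K : ℝ) + 1 ≤ Real.logb 2 (2 * Φ) := by
    have h1 : (K : ℝ) ≤ Real.logb 2 Φ := Nat.floor_le (Real.logb_nonneg one_lt_two hΦ1)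
    have h2 : Real.logb 2 (2 * Φ) = 1 + Real.logb 2 Φ := by
      rw [Real.logb_mul (by norm_num) (by linarith), Real.logb_self_eq_one (by norm_num)]
    linarith
  calc (Nat.card S : ℝ) ≤ ∑ k ∈ Finset.range (K + 1), (Nat.card (Sk k) : ℝ) := hcard1
    _ ≤ ∑ k ∈ Finset.range (K + 1), (1 + 32 / ε) ^ d :=
        Finset.sum_le_sum fun k _ => hA k
    _ = ((K : ℝ) + 1) * (1 + 32 / ε) ^ d := by
        rw [Finset.sum_const, Finset.card_range]; push_cast; ring
    _ ≤ Real.logb 2 (2 * Φ) * (33 ^ d / ε ^ d) := by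
        exact mul_le_mul hKlog hAle (by positivity) (Real.logb_nonneg one_lt_two (by linarith))
    _ = 33 ^ d / ε ^ d * Real.logb 2 (2 * Φ) := by ring
end

section
/- Let (X, d) be a metric space, let P ⊆ X be a finite set of at least two points with spread Φ, let ε ∈ (0,1), and let q ∈ X. Let v₀, v₁, …, v_k be points of P such that d(q, v_{m+1}) ≤ (1 − ε/4)·d(q, v_m) for every m < k, and such that d(q, v_{k−1}) > (1 + ε)·d(q, P). Then k ≤ 1 + log(1 + 2Φ)/log(1/(1 − ε/4)). -/
/-!
Let `p` be a nearest point of `P` to `q`. Since `d(q, v_{k-1}) > d(q, p)`, the points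
`v_{k-1}` and `p` are distinct, so `cp(P) ≤ d(v_{k-1}, p) < 2 d(q, v_{k-1})`. Hence
`d(q, v₀) ≤ d(q, p) + diam P < (1 + 2Φ) d(q, v_{k-1})`, while the geometric decay of the walk
gives `d(q, v_{k-1}) ≤ (1 - ε/4)^(k-1) d(q, v₀)`. Comparing the two and taking logarithms
bounds `k - 1`.
-/

open Metric

namespace Metric

variable {X : Type*} [MetricSpace X]

def pairDists (P : Set X) : Set ℝ :=
  {r : ℝ | ∃ x ∈ P, ∃ y ∈ P, x ≠ y ∧ r = dist x y}

/-- Junk value `0` (as `sInf ∅`) when `P` has fewer than two points. -/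
noncomputable def closestPairDist (P : Set X) : ℝ :=
  sInf (pairDists P)

noncomputable def spread (P : Set X) : ℝ :=
  diam P / closestPairDist P

theorem finite_pairDists {P : Set X} (hP : P.Finite) : (pairDists P).Finite := by
  refine ((hP.prod hP).image fun z : X × X => dist z.1 z.2).subset ?_
  rintro r ⟨x, hx, y, hy, -, rfl⟩
  exact ⟨(x, y), ⟨hx, hy⟩, rfl⟩

theorem closestPairDist_le_dist {P : Set X} (hP : P.Finite) {x y : X} (hx : x ∈ P) (hy : y ∈ P)
    (hxy : x ≠ y) : closestPairDist P ≤ dist x y :=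
  csInf_le (finite_pairDists hP).bddBelow ⟨x, hx, y, hy, hxy, rfl⟩

theorem closestPairDist_nonneg (P : Set X) : 0 ≤ closestPairDist P :=
  Real.sInf_nonneg fun _ ⟨_, _, _, _, _, hr⟩ => hr ▸ dist_nonneg

theorem spread_nonneg (P : Set X) : 0 ≤ spread P :=
  div_nonneg diam_nonneg (closestPairDist_nonneg P)

theorem closestPairDist_pos {P : Set X} (hP : P.Finite) {x y : X} (hx : x ∈ P) (hy : y ∈ P)
    (hxy : x ≠ y) : 0 < closestPairDist P := by
  obtain ⟨x', -, y', -, hxy', hr⟩ :=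
    Set.Nonempty.csInf_mem (s := pairDists P) ⟨_, x, hx, y, hy, hxy, rfl⟩ (finite_pairDists hP)
  rw [closestPairDist, hr]
  exact dist_pos.mpr hxy'

theorem exists_ne_infDist_eq_dist {P : Set X} (hP : P.Finite) {q w : X} (hw : w ∈ P)
    (hfar : infDist q P < dist q w) : ∃ p ∈ P, w ≠ p ∧ infDist q P = dist q p := by
  obtain ⟨p, hp, hpq⟩ := hP.isCompact.exists_infDist_eq_dist ⟨w, hw⟩ q
  exact ⟨p, hp, by rintro rfl; exact hfar.ne hpq, hpq⟩

theorem closestPairDist_lt_two_mul_dist {P : Set X} (hP : P.Finite) {q w : X} (hw : w ∈ P)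
    (hfar : infDist q P < dist q w) : closestPairDist P < 2 * dist q w := by
  obtain ⟨p, hp, hwp, hpq⟩ := exists_ne_infDist_eq_dist hP hw hfar
  calc closestPairDist P ≤ dist w p := closestPairDist_le_dist hP hw hp hwp
    _ ≤ dist q w + dist q p := dist_triangle_left w p q
    _ < 2 * dist q w := by linarith

theorem dist_lt_one_add_two_mul_spread_mul {P : Set X} (hP : P.Finite) {q v w : X} (hv : v ∈ P)
    (hw : w ∈ P) (hfar : infDist q P < dist q w) :
    dist q v < (1 + 2 * spread P) * dist q w := by
  obtain ⟨p, hp, hwp, hpq⟩ := exists_ne_infDist_eq_dist hP hw hfar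
  have hdiam : diam P = spread P * closestPairDist P :=
    (div_mul_cancel₀ _ (closestPairDist_pos hP hw hp hwp).ne').symm
  have hcp := closestPairDist_lt_two_mul_dist hP hw hfar
  calc dist q v ≤ dist q p + dist p v := dist_triangle q p v
    _ ≤ infDist q P + spread P * closestPairDist P := by
        rw [hpq, ← hdiam]; gcongr; exact dist_le_diam_of_mem hP.isBounded hp hv
    _ < (1 + 2 * spread P) * dist q w := by
        nlinarith [mul_le_mul_of_nonneg_left hcp.le (spread_nonneg P)]

end Metric

theorem nat_le_log_div_log_one_div_of_le_pow_mul {c a b R : ℝ} {n : ℕ} (hc0 : 0 < c)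
    (hc1 : c < 1) (hb : 0 < b) (hba : b ≤ c ^ n * a) (haR : a ≤ R * b) :
    (n : ℝ) ≤ Real.log R / Real.log (1 / c) := by
  have hpow : (1 / c) ^ n * b ≤ R * b := by
    calc (1 / c) ^ n * b ≤ (1 / c) ^ n * (c ^ n * a) := by gcongr
      _ = a := by rw [← mul_assoc, ← mul_pow, one_div_mul_cancel hc0.ne', one_pow, one_mul]
      _ ≤ R * b := haR
  have hR : 0 < R := by nlinarith [pow_pos (one_div_pos.mpr hc0) n]
  rw [Real.log_div_log, Real.le_logb_iff_rpow_le (one_lt_one_div hc0 hc1) hR, Real.rpow_natCast]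
  exact le_of_mul_le_mul_right hpow hb

theorem stmt_13_general {X : Type*} [MetricSpace X] (P : Set X) (hfin : P.Finite)
    (Φ : ℝ)
    (hΦ : Φ = Metric.diam P / sInf {r : ℝ | ∃ x ∈ P, ∃ y ∈ P, x ≠ y ∧ r = dist x y})
    (ε : ℝ) (hε : ε ∈ Set.Ioo (0 : ℝ) 1) (q : X)
    (k : ℕ) (v : ℕ → X) (hv : ∀ m ≤ k, v m ∈ P)
    (hstep : ∀ m < k, dist q (v (m + 1)) ≤ (1 - ε / 4) * dist q (v m))
    (hlast : (1 + ε) * Metric.infDist q P < dist q (v (k - 1))) :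
    (k : ℝ) ≤ 1 + Real.log (1 + 2 * Φ) / Real.log (1 / (1 - ε / 4)) := by
  obtain ⟨hε0, hε1⟩ := hε
  have hfar : infDist q P < dist q (v (k - 1)) := by nlinarith [infDist_nonneg (x := q) (s := P)]
  have hdecay : dist q (v (k - 1)) ≤ (1 - ε / 4) ^ (k - 1) * dist q (v 0) :=
    le_geom (u := fun m => dist q (v m)) (by linarith) (k - 1) fun m hm => hstep m (by omega)
  have hstart : dist q (v 0) ≤ (1 + 2 * Φ) * dist q (v (k - 1)) :=
    hΦ ▸ (dist_lt_one_add_two_mul_spread_mul hfin (hv 0 k.zero_le) (hv (k - 1) (k.sub_le 1))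
      hfar).le
  have hsteps := nat_le_log_div_log_one_div_of_le_pow_mul (by linarith) (by linarith)
    (infDist_nonneg.trans_lt hfar) hdecay hstart
  have hk : (k : ℝ) ≤ ((k - 1 : ℕ) : ℝ) + 1 := mod_cast (by omega : k ≤ k - 1 + 1)
  linarith

/-- **Step count of greedy walks.** In a metric space, let `P` be a finite set of at
least two points with spread `Φ`, `ε ∈ (0,1)`, and `q` a query point. If
`v₀, …, v_k ∈ P` satisfy `d(q, v_{m+1}) ≤ (1 - ε/4) d(q, v_m)` for all `m < k`, and
`d(q, v_{k-1}) > (1+ε) d(q, P)`, then `k ≤ 1 + log(1 + 2Φ) / log(1/(1 - ε/4))`. -/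
theorem stmt_13 {X : Type*} [MetricSpace X] (P : Set X) (hfin : P.Finite)
    (hcard : 2 ≤ Nat.card P) (Φ : ℝ)
    (hΦ : Φ = Metric.diam P / sInf {r : ℝ | ∃ x ∈ P, ∃ y ∈ P, x ≠ y ∧ r = dist x y})
    (ε : ℝ) (hε : ε ∈ Set.Ioo (0 : ℝ) 1) (q : X)
    (k : ℕ) (hk : 1 ≤ k) (v : ℕ → X) (hv : ∀ m ≤ k, v m ∈ P)
    (hstep : ∀ m < k, dist q (v (m + 1)) ≤ (1 - ε / 4) * dist q (v m))
    (hlast : (1 + ε) * Metric.infDist q P < dist q (v (k - 1))) :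
    (k : ℝ) ≤ 1 + Real.log (1 + 2 * Φ) / Real.log (1 / (1 - ε / 4)) :=
  stmt_13_general P hfin Φ hΦ ε hε q k v hv hstep hlast
end

section
/- For every integer d ≥ 1 there is a constant C = C(d) > 0 such that the following holds. Let P ⊆ ℝ^d (with the Euclidean metric) be a finite set of n ≥ 2 points with spread Φ, and let ε ∈ (0,1). Then there exist two directed graphs G_{1/2} = (P, E_{1/2}) and G_ε = (P, E_ε) with |E_{1/2}| ≤ C·n·log₂(2Φ) and |E_ε| ≤ C·ε^{−d}·n·log₂(2Φ), such that for every query point q ∈ ℝ^d: (a) for every p ∈ P with dist(q, p) > (3/2)·dist(q, P), there is an edge (p, p′) ∈ E_{1/2} with dist(q, p′) ≤ (1/8)·dist(q, p) + dist(q, P); and (b) for every p ∈ P with (1 + ε)·dist(q, P) < dist(q, p) ≤ 3·dist(q, P), there is an edge (p, p′) ∈ E_ε with dist(q, p′) ≤ (1 + ε)·dist(q, P). -/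
/-!
Fix `t > 0`. For each `p ∈ P` and each dyadic annulus `2^i ≤ dist p s < 2^(i+1)` around `p`,
join `p` to a maximal `t 2^i`-separated set of points of `P` in that annulus. It covers the
annulus to within `t 2^i ≤ t · dist p s`, a volume packing argument bounds its size by
`(4/t + 1)^d`, and only `O(log Φ)` annuli are nonempty. If `p*` is a nearest neighbour of `q`
and `m` the out-neighbour of `p` covering `p*`, then
`dist q m ≤ dist(q,P) + t · dist p p* ≤ dist(q,P) + t · (dist q p + dist(q,P))`,
which gives (a) for `t = 3/40` and, since `dist q p ≤ 3 dist(q,P)` there, (b) for `t = ε/4`.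
-/

open Metric MeasureTheory Module Real

section MetricSpace
variable {X : Type*} [MetricSpace X]

theorem Finset.exists_separated_cover (A : Finset X) {r : ℝ} (hr : 0 ≤ r) :
    ∃ N ⊆ A, (N : Set X).Pairwise (fun y z => r < dist y z) ∧
      ∀ a ∈ A, ∃ m ∈ N, dist a m ≤ r := by
  have hfin : {N : Set X | N ⊆ A ∧ IsSeparated (r.toNNReal : ENNReal) N}.Finite :=
    A.finite_toSet.finite_subsets.subset fun N hN => hN.1
  obtain ⟨N, -, hN⟩ := hfin.exists_le_maximal (a := ∅) ⟨Set.empty_subset _, .empty⟩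
  have hNA : N ⊆ A := hN.prop.1
  lift N to Finset X using A.finite_toSet.subset hNA
  refine ⟨N, by exact_mod_cast hNA, fun y hy z hz hyz => ?_, fun a ha => ?_⟩
  · simpa [edist_dist, ENNReal.ofReal_lt_ofReal_iff', dist_pos.2 hyz] using hN.prop.2 hy hz hyz
  · obtain ⟨m, hm, ham⟩ := IsCover.of_maximal_isSeparated hN (Finset.mem_coe.2 ha)
    exact ⟨m, hm, by simpa [edist_dist, hr] using ham⟩

def pairDists (P : Finset X) : Set ℝ :=
  {r | ∃ x ∈ P, ∃ y ∈ P, x ≠ y ∧ r = dist x y}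

theorem finite_pairDists (P : Finset X) : Set.Finite (pairDists P) :=
  ((P ×ˢ P).finite_toSet.image fun e => dist e.1 e.2).subset <| by
    rintro _ ⟨x, hx, y, hy, -, rfl⟩
    exact ⟨(x, y), Finset.mem_product.2 ⟨hx, hy⟩, rfl⟩

theorem sInf_pairDists_le {P : Finset X} {x y : X} (hx : x ∈ P) (hy : y ∈ P) (hxy : x ≠ y) :
    sInf (pairDists P) ≤ dist x y :=
  csInf_le (finite_pairDists P).bddBelow ⟨x, hx, y, hy, hxy, rfl⟩

theorem sInf_pairDists_mem {P : Finset X} (hP : 2 ≤ P.card) :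
    sInf (pairDists P) ∈ pairDists P := by
  obtain ⟨x, hx, y, hy, hxy⟩ := Finset.one_lt_card.1 hP
  exact Set.Nonempty.csInf_mem ⟨_, x, hx, y, hy, hxy, rfl⟩ (finite_pairDists P)

def IsRelNetGraph (t : ℝ) (P : Finset X) (G : Finset (X × X)) : Prop :=
  ∀ p ∈ P, ∀ s ∈ P, s ≠ p → ∃ m, (p, m) ∈ G ∧ dist s m ≤ t * dist p s

theorem IsRelNetGraph.exists_dist_le {t : ℝ} {P : Finset X} {G : Finset (X × X)}
    (hG : IsRelNetGraph t P G) (ht : 0 ≤ t) (q : X) {p : X} (hp : p ∈ P)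
    (hfar : infDist q P < dist q p) :
    ∃ m, (p, m) ∈ G ∧ dist q m ≤ infDist q P + t * (dist q p + infDist q P) := by
  obtain ⟨s, hs, hqs⟩ := P.finite_toSet.isCompact.exists_infDist_eq_dist ⟨p, hp⟩ q
  have hsp : s ≠ p := by rintro rfl; exact hfar.ne hqs
  obtain ⟨m, hpm, hsm⟩ := hG p hp s hs hsp
  refine ⟨m, hpm, ?_⟩
  calc dist q m ≤ dist q s + dist s m := dist_triangle q s m
    _ ≤ dist q s + t * (dist q p + dist q s) := by
        gcongr; exact hsm.trans (by gcongr; exact dist_triangle_left p s q)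
    _ = _ := by rw [hqs]

end MetricSpace

theorem card_image_intLog_le_logb {ι : Type*} (A : Finset ι) (f : ι → ℝ) {c D : ℝ}
    (hc : 0 < c) (hcD : c ≤ D) (hf : ∀ i ∈ A, c ≤ f i ∧ f i ≤ D) :
    ((A.image fun i => Int.log 2 (f i)).card : ℝ) ≤ 2 * logb 2 (2 * (D / c)) := by
  have hD : 0 < D := hc.trans_le hcD
  have hsub : A.image (fun i => Int.log 2 (f i)) ⊆ Finset.Icc (Int.log 2 c) (Int.log 2 D) := by
    simp only [Finset.subset_iff, Finset.mem_image, Finset.mem_Icc]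
    rintro _ ⟨i, hi, rfl⟩
    exact ⟨Int.log_mono_right hc (hf i hi).1,
      Int.log_mono_right (hc.trans_le (hf i hi).1) (hf i hi).2⟩
  have hIcc : ((Finset.Icc (Int.log 2 c) (Int.log 2 D)).card : ℤ) =
      Int.log 2 D + 1 - Int.log 2 c := by
    rw [Int.card_Icc, Int.toNat_of_nonneg (by linarith [Int.log_mono_right (b := 2) hc hcD])]
  have hlogD : (Int.log 2 D : ℝ) ≤ logb 2 D := by
    rw [← Nat.cast_ofNat, ← floor_logb_natCast hD.le]; exact Int.floor_le _
  have hlogc : logb 2 c < Int.log 2 c + 1 := by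
    rw [← Nat.cast_ofNat, ← floor_logb_natCast hc.le]; exact Int.lt_floor_add_one _
  have hcD_logb : logb 2 c ≤ logb 2 D := logb_le_logb_of_le one_lt_two hc hcD
  rw [logb_mul two_ne_zero (by positivity), logb_self_eq_one one_lt_two, logb_div hD.ne' hc.ne']
  calc ((A.image fun i => Int.log 2 (f i)).card : ℝ)
      ≤ (Finset.Icc (Int.log 2 c) (Int.log 2 D)).card := by
        exact_mod_cast Finset.card_le_card hsub
    _ = Int.log 2 D + 1 - Int.log 2 c := by exact_mod_cast hIcc
    _ ≤ _ := by linarith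

section FiniteDimensional
variable {E : Type*} [NormedAddCommGroup E] [NormedSpace ℝ E] [FiniteDimensional ℝ E]

theorem Finset.card_le_of_separated_of_subset_closedBall (s : Finset E) {x : E} {R r : ℝ}
    (hr : 0 < r) (hR : 0 ≤ R) (hsR : (s : Set E) ⊆ closedBall x R)
    (hsep : (s : Set E).Pairwise fun y z => r ≤ dist y z) :
    (s.card : ℝ) ≤ (2 * R / r + 1) ^ finrank ℝ E := by
  borelize E
  set μ : Measure E := Measure.addHaar
  have hdisj : (s : Set E).PairwiseDisjoint fun y => ball y (r / 2) := fun y hy z hz hyz =>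
    ball_disjoint_ball (by linarith [hsep hy hz hyz])
  have hsub : (⋃ y ∈ s, ball y (r / 2)) ⊆ ball x (R + r / 2) :=
    Set.iUnion₂_subset fun y hy => ball_subset_ball' <| by
      linarith [mem_closedBall.1 (hsR hy)]
  have hvol : (s.card : ENNReal) * ENNReal.ofReal ((r / 2) ^ finrank ℝ E) * μ (ball 0 1) ≤
      ENNReal.ofReal ((R + r / 2) ^ finrank ℝ E) * μ (ball 0 1) := by
    calc _ = μ (⋃ y ∈ s, ball y (r / 2)) := by
          rw [measure_biUnion_finset hdisj fun y _ => measurableSet_ball]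
          simp [Measure.addHaar_ball_of_pos μ _ (half_pos hr), mul_assoc]
      _ ≤ μ (ball x (R + r / 2)) := measure_mono hsub
      _ = _ := Measure.addHaar_ball_of_pos μ x (by positivity)
  rw [ENNReal.mul_le_mul_iff_left (measure_ball_pos μ 0 one_pos).ne' measure_ball_lt_top.ne,
    ← ENNReal.ofReal_natCast, ← ENNReal.ofReal_mul (by positivity),
    ENNReal.ofReal_le_ofReal_iff (by positivity)] at hvol
  calc (s.card : ℝ) ≤ (R + r / 2) ^ finrank ℝ E / (r / 2) ^ finrank ℝ E := by
        rwa [le_div_iff₀ (by positivity)]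
    _ = _ := by rw [← div_pow]; congr 1; field_simp

theorem Finset.exists_relCover (Q : Finset E) {p : E} (hp : p ∉ Q) {t : ℝ} (ht : 0 < t) :
    ∃ N ⊆ Q, (∀ s ∈ Q, ∃ m ∈ N, dist s m ≤ t * dist p s) ∧
      (N.card : ℝ) ≤
        (4 / t + 1) ^ finrank ℝ E * (Q.image fun s => Int.log 2 (dist p s)).card := by
  classical
  set scale : E → ℤ := fun s => Int.log 2 (dist p s)
  have hpos : ∀ s ∈ Q, 0 < dist p s := fun s hs => dist_pos.2 (ne_of_mem_of_not_mem hs hp).symm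
  choose net hnetQ hnetsep hnetcov using fun i : ℤ =>
    (Q.filter fun s => scale s = i).exists_separated_cover (r := t * 2 ^ i) (by positivity)
  refine ⟨(Q.image scale).biUnion net, ?_, fun s hs => ?_, ?_⟩
  · exact Finset.biUnion_subset.2 fun i _ => (hnetQ i).trans (Finset.filter_subset _ _)
  · obtain ⟨m, hm, hsm⟩ := hnetcov (scale s) s (Finset.mem_filter.2 ⟨hs, rfl⟩)
    refine ⟨m, Finset.mem_biUnion.2 ⟨scale s, Finset.mem_image_of_mem _ hs, hm⟩, ?_⟩
    calc dist s m ≤ t * 2 ^ scale s := hsm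
      _ ≤ t * dist p s := by gcongr; exact Int.zpow_log_le_self one_lt_two (hpos s hs)
  · have hnet_card : ∀ i, ((net i).card : ℝ) ≤ (4 / t + 1) ^ finrank ℝ E := by
      intro i
      have hball : (net i : Set E) ⊆ closedBall p (2 * 2 ^ i) := by
        intro y hy
        obtain ⟨-, hyi⟩ := Finset.mem_filter.1 (hnetQ i hy)
        have := Int.lt_zpow_succ_log_self one_lt_two (dist p y)
        rw [Nat.cast_ofNat, zpow_add_one₀ two_ne_zero] at this
        rw [mem_closedBall', ← hyi]
        linarith
      calc ((net i).card : ℝ)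
          ≤ (2 * (2 * 2 ^ i) / (t * 2 ^ i) + 1) ^ finrank ℝ E :=
            (net i).card_le_of_separated_of_subset_closedBall (by positivity) (by positivity)
              hball fun y hy z hz hyz => (hnetsep i hy hz hyz).le
        _ = _ := by congr 2; field_simp; ring
    calc ((Q.image scale).biUnion net).card ≤ ∑ i ∈ Q.image scale, ((net i).card : ℝ) := by
          exact_mod_cast Finset.card_biUnion_le
      _ ≤ ∑ i ∈ Q.image scale, (4 / t + 1) ^ finrank ℝ E :=
          Finset.sum_le_sum fun i _ => hnet_card i
      _ = _ := by rw [Finset.sum_const, nsmul_eq_mul, mul_comm]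

theorem exists_isRelNetGraph (P : Finset E) {t c D : ℝ} (ht : 0 < t) (hc : 0 < c)
    (hcD : c ≤ D) (hsep : ∀ x ∈ P, ∀ y ∈ P, x ≠ y → c ≤ dist x y)
    (hdiam : ∀ x ∈ P, ∀ y ∈ P, dist x y ≤ D) :
    ∃ G : Finset (E × E), (∀ e ∈ G, e.1 ∈ P ∧ e.2 ∈ P) ∧ IsRelNetGraph t P G ∧
      (G.card : ℝ) ≤ 2 * (4 / t + 1) ^ finrank ℝ E * P.card * logb 2 (2 * (D / c)) := by
  classical
  choose N hNP hNcov hNcard using fun p => (P.erase p).exists_relCover (P.notMem_erase p) ht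
  refine ⟨P.biUnion fun p => (N p).image (Prod.mk p), ?_, ?_, ?_⟩
  · simp only [Finset.mem_biUnion, Finset.mem_image]
    rintro _ ⟨p, hp, m, hm, rfl⟩
    exact ⟨hp, Finset.mem_of_mem_erase (hNP p hm)⟩
  · intro p hp s hs hsp
    obtain ⟨m, hm, hsm⟩ := hNcov p s (Finset.mem_erase.2 ⟨hsp, hs⟩)
    exact ⟨m, Finset.mem_biUnion.2 ⟨p, hp, Finset.mem_image_of_mem _ hm⟩, hsm⟩
  · have hN : ∀ p ∈ P,
        ((N p).card : ℝ) ≤ (4 / t + 1) ^ finrank ℝ E * (2 * logb 2 (2 * (D / c))) :=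
      fun p hp => (hNcard p).trans <| by
        gcongr
        refine card_image_intLog_le_logb _ _ hc hcD fun s hs => ?_
        obtain ⟨hsp, hsP⟩ := Finset.mem_erase.1 hs
        exact ⟨hsep p hp s hsP hsp.symm, hdiam p hp s hsP⟩
    calc ((P.biUnion fun p => (N p).image (Prod.mk p)).card : ℝ)
        ≤ ∑ p ∈ P, ((N p).card : ℝ) := by
          exact_mod_cast Finset.card_biUnion_le.trans
            (Finset.sum_le_sum fun p _ => Finset.card_image_le)
      _ ≤ ∑ p ∈ P, (4 / t + 1) ^ finrank ℝ E * (2 * logb 2 (2 * (D / c))) :=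
          Finset.sum_le_sum hN
      _ = _ := by rw [Finset.sum_const, nsmul_eq_mul]; ring

end FiniteDimensional

theorem stmt_14_general (d : ℕ) :
    ∃ C : ℝ, 0 < C ∧
      ∀ P : Finset (EuclideanSpace ℝ (Fin d)), 2 ≤ P.card →
      ∀ Φ : ℝ,
        Φ = Metric.diam (P : Set (EuclideanSpace ℝ (Fin d))) /
              sInf {r : ℝ | ∃ x ∈ P, ∃ y ∈ P, x ≠ y ∧ r = dist x y} →
      ∀ ε : ℝ, ε ∈ Set.Ioo (0 : ℝ) 1 →
      ∃ E₁ E₂ : Finset (EuclideanSpace ℝ (Fin d) × EuclideanSpace ℝ (Fin d)),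
        (∀ e ∈ E₁, e.1 ∈ P ∧ e.2 ∈ P) ∧
        (∀ e ∈ E₂, e.1 ∈ P ∧ e.2 ∈ P) ∧
        (E₁.card : ℝ) ≤ C * P.card * Real.logb 2 (2 * Φ) ∧
        (E₂.card : ℝ) ≤ C / ε ^ d * P.card * Real.logb 2 (2 * Φ) ∧
        (∀ q : EuclideanSpace ℝ (Fin d),
          (∀ p ∈ P,
            3 / 2 * Metric.infDist q (P : Set (EuclideanSpace ℝ (Fin d))) < dist q p →
            ∃ p', (p, p') ∈ E₁ ∧
              dist q p' ≤ 1 / 8 * dist q p +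
                Metric.infDist q (P : Set (EuclideanSpace ℝ (Fin d)))) ∧
          (∀ p ∈ P,
            (1 + ε) * Metric.infDist q (P : Set (EuclideanSpace ℝ (Fin d))) <
              dist q p →
            dist q p ≤ 3 * Metric.infDist q (P : Set (EuclideanSpace ℝ (Fin d))) →
            ∃ p', (p, p') ∈ E₂ ∧
              dist q p' ≤
                (1 + ε) * Metric.infDist q (P : Set (EuclideanSpace ℝ (Fin d))))) := by
  -- `4 / (3/40) + 1 ≤ 55` and `4 / (ε/4) + 1 ≤ 17 / ε`
  refine ⟨2 * 55 ^ d, by positivity, fun P hP Φ hΦ ε ⟨hε0, hε1⟩ => ?_⟩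
  set c := sInf (pairDists P)
  set D := diam (P : Set (EuclideanSpace ℝ (Fin d)))
  replace hΦ : Φ = D / c := hΦ
  subst hΦ
  have hdiam : ∀ x ∈ P, ∀ y ∈ P, dist x y ≤ D := fun x hx y hy =>
    dist_le_diam_of_mem P.finite_toSet.isBounded hx hy
  have hsep : ∀ x ∈ P, ∀ y ∈ P, x ≠ y → c ≤ dist x y := fun _ hx _ hy =>
    sInf_pairDists_le hx hy
  obtain ⟨x, hx, y, hy, hxy, hcxy⟩ : c ∈ pairDists P := sInf_pairDists_mem hP
  have hc : 0 < c := hcxy ▸ dist_pos.2 hxy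
  have hcD : c ≤ D := hcxy ▸ hdiam x hx y hy
  have hL : 0 ≤ logb 2 (2 * (D / c)) :=
    logb_nonneg one_lt_two (by linarith [(one_le_div hc).2 hcD])
  obtain ⟨E₁, hE₁P, hE₁, hE₁card⟩ :=
    exists_isRelNetGraph P (t := 3 / 40) (by norm_num) hc hcD hsep hdiam
  obtain ⟨E₂, hE₂P, hE₂, hE₂card⟩ :=
    exists_isRelNetGraph P (t := ε / 4) (by positivity) hc hcD hsep hdiam
  rw [finrank_euclideanSpace_fin] at hE₁card hE₂card
  refine ⟨E₁, E₂, hE₁P, hE₂P, hE₁card.trans ?_, hE₂card.trans ?_,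
    fun q => ⟨?_, ?_⟩⟩
  · gcongr; norm_num
  · rw [mul_div_assoc, ← div_pow]
    gcongr
    rw [le_div_iff₀ hε0]; field_simp; linarith
  · intro p hp hfar
    have hδ := infDist_nonneg (x := q) (s := (P : Set (EuclideanSpace ℝ (Fin d))))
    obtain ⟨m, hpm, hqm⟩ := hE₁.exists_dist_le (by norm_num) q hp (by linarith)
    exact ⟨m, hpm, by linarith⟩
  · intro p hp hfar hnear
    have hδ := infDist_nonneg (x := q) (s := (P : Set (EuclideanSpace ℝ (Fin d))))
    obtain ⟨m, hpm, hqm⟩ := hE₂.exists_dist_le (by positivity) q hp (by nlinarith)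
    exact ⟨m, hpm, by nlinarith⟩

/-- **The two-graph scheme.** For every `d ≥ 1` there is `C = C(d) > 0` such that
for every finite `P ⊆ ℝ^d` with `n ≥ 2` points, spread `Φ`, and `ε ∈ (0,1)`, there
are directed graphs `E₁ = E_{1/2}` and `E₂ = E_ε` on `P` with
`|E₁| ≤ C n log₂(2Φ)` and `|E₂| ≤ C ε⁻ᵈ n log₂(2Φ)`, such that for every query `q`:
(a) for every `p ∈ P` with `dist q p > (3/2) dist(q,P)` there is an edge
`(p, p') ∈ E₁` with `dist q p' ≤ (1/8) dist q p + dist(q,P)`; and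
(b) for every `p ∈ P` with `(1+ε) dist(q,P) < dist q p ≤ 3 dist(q,P)` there is an
edge `(p, p') ∈ E₂` with `dist q p' ≤ (1+ε) dist(q,P)`. -/
theorem stmt_14 (d : ℕ) (hd : 1 ≤ d) :
    ∃ C : ℝ, 0 < C ∧
      ∀ P : Finset (EuclideanSpace ℝ (Fin d)), 2 ≤ P.card →
      ∀ Φ : ℝ,
        Φ = Metric.diam (P : Set (EuclideanSpace ℝ (Fin d))) /
              sInf {r : ℝ | ∃ x ∈ P, ∃ y ∈ P, x ≠ y ∧ r = dist x y} →
      ∀ ε : ℝ, ε ∈ Set.Ioo (0 : ℝ) 1 →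
      ∃ E₁ E₂ : Finset (EuclideanSpace ℝ (Fin d) × EuclideanSpace ℝ (Fin d)),
        (∀ e ∈ E₁, e.1 ∈ P ∧ e.2 ∈ P) ∧
        (∀ e ∈ E₂, e.1 ∈ P ∧ e.2 ∈ P) ∧
        (E₁.card : ℝ) ≤ C * P.card * Real.logb 2 (2 * Φ) ∧
        (E₂.card : ℝ) ≤ C / ε ^ d * P.card * Real.logb 2 (2 * Φ) ∧
        (∀ q : EuclideanSpace ℝ (Fin d),
          (∀ p ∈ P,
            3 / 2 * Metric.infDist q (P : Set (EuclideanSpace ℝ (Fin d))) < dist q p →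
            ∃ p', (p, p') ∈ E₁ ∧
              dist q p' ≤ 1 / 8 * dist q p +
                Metric.infDist q (P : Set (EuclideanSpace ℝ (Fin d)))) ∧
          (∀ p ∈ P,
            (1 + ε) * Metric.infDist q (P : Set (EuclideanSpace ℝ (Fin d))) <
              dist q p →
            dist q p ≤ 3 * Metric.infDist q (P : Set (EuclideanSpace ℝ (Fin d))) →
            ∃ p', (p, p') ∈ E₂ ∧
              dist q p' ≤
                (1 + ε) * Metric.infDist q (P : Set (EuclideanSpace ℝ (Fin d))))) :=
  stmt_14_general d
end
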